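/- arXiv:1905.07804 — 7 statements merged into one kernel-verified Lean document; each statement's English description precedes it below -/
import Mathlib

section
/- Let Q be an m×m real symmetric invertible matrix and A an arbitrary m×m real matrix. Define D(M) := −M − Mᵀ + M Q Mᵀ for an m×m matrix M. Then D(A) = D(2Q⁻¹ − A). Consequently, the perturbed covariance functions coincide: G₀(x,y) + ψ(x)ᵀ D(A) ψ(y) = G₀(x,y) + ψ(x)ᵀ D(2Q⁻¹ − A) ψ(y), so the Gaussian functions X_A and X_{2Q⁻¹−A} have the same covariance and hence the same distribution. -/
open Matrix

namespace Matrix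

variable {n R : Type*} [Fintype n] [DecidableEq n] [CommRing R]

/-- The matrix `D(M)` with `G_M(x, y) = G₀(x, y) + ψ(x)ᵀ D(M) ψ(y)`. -/
def covarianceCorrection (Q M : Matrix n n R) : Matrix n n R :=
  -M - Mᵀ + M * Q * Mᵀ

/-- Since `PQ = QP = 1`, the quadratic term of `D(2P - A)` is `4P - 2A - 2Aᵀ + AQAᵀ`. -/
theorem covarianceCorrection_two_smul_sub {Q P : Matrix n n R} (hP : P.IsSymm)
    (hPQ : P * Q = 1) (hQP : Q * P = 1) (A : Matrix n n R) :
    covarianceCorrection Q (2 • P - A) = covarianceCorrection Q A := by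
  have hPQP : P * Q * P = P := by rw [hPQ, one_mul]
  have hPQAt : P * Q * Aᵀ = Aᵀ := by rw [hPQ, one_mul]
  have hAQP : A * Q * P = A := by rw [mul_assoc, hQP, mul_one]
  simp only [covarianceCorrection, transpose_sub, transpose_smul, hP.eq, sub_mul, mul_sub,
    smul_mul_assoc, mul_smul_comm, hPQP, hPQAt, hAQP]
  module

end Matrix

/-- For a symmetric invertible matrix `Q` and `D(M) = -M - Mᵀ + M Q Mᵀ`, one has
`D(A) = D(2Q⁻¹ - A)`; consequently the perturbed covariances built from `D(A)` and
`D(2Q⁻¹ - A)` coincide, so `X_A` and `X_{2Q⁻¹ - A}` are equidistributed. -/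
theorem perturbation_symmetry
    {m : ℕ} (Q A : Matrix (Fin m) (Fin m) ℝ)
    (hQsym : Q.IsSymm) (hQinv : IsUnit Q.det)
    (D : Matrix (Fin m) (Fin m) ℝ → Matrix (Fin m) (Fin m) ℝ)
    (hD : ∀ M, D M = -M - Mᵀ + M * Q * Mᵀ)
    {α : Type*} (O : Set α) (G₀ : α → α → ℝ) (ψ : Fin m → α → ℝ) :
    D A = D (2 • Q⁻¹ - A) ∧
    ∀ x ∈ O, ∀ y ∈ O,
      G₀ x y + dotProduct (fun i => ψ i x) ((D A).mulVec (fun j => ψ j y)) =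
        G₀ x y +
          dotProduct (fun i => ψ i x)
            ((D (2 • Q⁻¹ - A)).mulVec (fun j => ψ j y)) := by
  have hD_eq : D = covarianceCorrection Q := funext hD
  have hD_reflect : D A = D (2 • Q⁻¹ - A) := by
    rw [hD_eq, covarianceCorrection_two_smul_sub hQsym.inv (nonsing_inv_mul Q hQinv)
      (mul_nonsing_inv Q hQinv)]
  exact ⟨hD_reflect, fun x _ y _ => by rw [hD_reflect]⟩
end

section
/- Suppose φ_j ∈ L²(O) for all j, Q is symmetric and invertible, and A = Q⁻¹ (so that D = −A − Aᵀ + A Q Aᵀ = −Q⁻¹). Define the perturbed kernel G_A(x,y) := G₀(x,y) + ψ(x)ᵀ D ψ(y). Then for every j = 1,…,m and a.e. x ∈ O, ∫_O G_A(x,y)φ_j(y) dy = 0; that is, the integral operator with kernel G_A annihilates each φ_j, so φ₁,…,φ_m are eigenfunctions corresponding to the zero eigenvalue (of multiplicity m). -/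
/-! Integrating the finite-rank part of `G_A(x, ·)` against `φ_j` produces
`ψ(x)ᵀ (-Q⁻¹) Q e_j = -ψ_j(x)`, which cancels the `G₀` part `∫ G₀(x, y) φ_j(y) dy = ψ_j(x)`. -/

open MeasureTheory Matrix

section FiniteRankKernel

variable {α ι κ : Type*} [Fintype ι] [Fintype κ] {ψ : κ → α → ℝ} {f : α → ℝ}

lemma dotProduct_mulVec_mul_eq_sum (u : ι → ℝ) (C : Matrix ι κ ℝ) (y : α) :
    (u ⬝ᵥ C *ᵥ fun k => ψ k y) * f y = ∑ k, (u ᵥ* C) k * (ψ k y * f y) := by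
  rw [dotProduct_mulVec, dotProduct, Finset.sum_mul]
  exact Finset.sum_congr rfl fun k _ => mul_assoc _ _ _

variable [MeasurableSpace α] {μ : Measure α}

lemma integrable_dotProduct_mulVec_mul (hint : ∀ k, Integrable (fun y => ψ k y * f y) μ)
    (u : ι → ℝ) (C : Matrix ι κ ℝ) :
    Integrable (fun y => (u ⬝ᵥ C *ᵥ fun k => ψ k y) * f y) μ := by
  simp_rw [dotProduct_mulVec_mul_eq_sum]
  exact integrable_finsetSum _ fun k _ => (hint k).const_mul _

lemma integral_dotProduct_mulVec_mul (hint : ∀ k, Integrable (fun y => ψ k y * f y) μ)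
    (u : ι → ℝ) (C : Matrix ι κ ℝ) :
    ∫ y, (u ⬝ᵥ C *ᵥ fun k => ψ k y) * f y ∂μ = u ⬝ᵥ C *ᵥ fun k => ∫ y, ψ k y * f y ∂μ := by
  simp_rw [dotProduct_mulVec_mul_eq_sum]
  rw [integral_finsetSum _ fun k _ => (hint k).const_mul _, dotProduct_mulVec, dotProduct]
  simp_rw [integral_const_mul]

end FiniteRankKernel

lemma dotProduct_neg_inv_mulVec_col {ι : Type*} [Fintype ι] [DecidableEq ι]
    {Q : Matrix ι ι ℝ} (hQ : IsUnit Q.det) (u : ι → ℝ) (j : ι) :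
    u ⬝ᵥ (-Q⁻¹) *ᵥ (fun k => Q k j) = -u j := by
  have hcol : (fun k => Q k j) = Q *ᵥ Pi.single j 1 := by
    ext k; simp [mulVec_single]
  rw [hcol, mulVec_mulVec, Matrix.neg_mul, nonsing_inv_mul Q hQ, neg_mulVec, one_mulVec,
    dotProduct_neg, dotProduct_single, mul_one]

theorem critical_kernel_annihilates_general
    {d m : ℕ} (O : Set (Fin d → ℝ))
    (G₀ : (Fin d → ℝ) → (Fin d → ℝ) → ℝ)
    (φ : Fin m → (Fin d → ℝ) → ℝ)
    (ψ : Fin m → (Fin d → ℝ) → ℝ)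
    (hψ : ∀ j, ∀ᵐ x ∂(volume.restrict O),
      Integrable (fun y => G₀ x y * φ j y) (volume.restrict O) ∧
        ψ j x = ∫ y in O, G₀ x y * φ j y)
    (Q : Matrix (Fin m) (Fin m) ℝ)
    (hQint : ∀ i j, Integrable (fun x => ψ i x * φ j x) (volume.restrict O))
    (hQ : ∀ i j, Q i j = ∫ x in O, ψ i x * φ j x)
    (hQinv : IsUnit Q.det)
    (GA : (Fin d → ℝ) → (Fin d → ℝ) → ℝ)
    (hGA : ∀ x y, GA x y =
      G₀ x y + dotProduct (fun i => ψ i x) ((-Q⁻¹).mulVec (fun j => ψ j y))) :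
    ∀ j, ∀ᵐ x ∂(volume.restrict O), ∫ y in O, GA x y * φ j y = 0 := by
  intro j
  filter_upwards [hψ j] with x ⟨hint, hψx⟩
  have hQcol : (fun k => ∫ y in O, ψ k y * φ j y) = fun k => Q k j :=
    funext fun k => (hQ k j).symm
  simp_rw [hGA, add_mul]
  rw [integral_add hint (integrable_dotProduct_mulVec_mul (fun k => hQint k j) _ _), ← hψx,
    integral_dotProduct_mulVec_mul (fun k => hQint k j), hQcol,
    dotProduct_neg_inv_mulVec_col hQinv, add_neg_cancel]

/-- In the critical case `A = Q⁻¹` (so `D = -Q⁻¹`), the integral operator with the perturbed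
kernel `G_A(x,y) = G₀(x,y) + ψ(x)ᵀ D ψ(y)` annihilates each `φ_j`: the `φ_j` are
eigenfunctions with zero eigenvalue. -/
theorem critical_kernel_annihilates
    {d m : ℕ} (O : Set (Fin d → ℝ)) (hO : IsOpen O) (hObdd : Bornology.IsBounded O)
    (G₀ : (Fin d → ℝ) → (Fin d → ℝ) → ℝ)
    (hG₀meas : Measurable (Function.uncurry G₀)) (hG₀sym : ∀ x y, G₀ x y = G₀ y x)
    (φ : Fin m → (Fin d → ℝ) → ℝ)
    (hφL2 : ∀ j, MemLp (φ j) 2 (volume.restrict O))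
    (hφind : LinearIndependent ℝ φ)
    (ψ : Fin m → (Fin d → ℝ) → ℝ)
    (hψ : ∀ j, ∀ᵐ x ∂(volume.restrict O),
      Integrable (fun y => G₀ x y * φ j y) (volume.restrict O) ∧
        ψ j x = ∫ y in O, G₀ x y * φ j y)
    (Q : Matrix (Fin m) (Fin m) ℝ)
    (hQint : ∀ i j, Integrable (fun x => ψ i x * φ j x) (volume.restrict O))
    (hQ : ∀ i j, Q i j = ∫ x in O, ψ i x * φ j x)
    (hQsym : Q.IsSymm) (hQinv : IsUnit Q.det)
    (GA : (Fin d → ℝ) → (Fin d → ℝ) → ℝ)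
    (hGA : ∀ x y, GA x y =
      G₀ x y + dotProduct (fun i => ψ i x) ((-Q⁻¹).mulVec (fun j => ψ j y))) :
    ∀ j, ∀ᵐ x ∂(volume.restrict O), ∫ y in O, GA x y * φ j y = 0 :=
  critical_kernel_annihilates_general O G₀ φ ψ hψ Q hQint hQ hQinv GA hGA
end

section
/- (Theorem 4, Durbin's processes are critical.) Let ψ₁,…,ψ_m : [0,1] → ℝ be C² functions with ψ_j(0) = ψ_j(1) = 0 for all j, and set φ_j := −ψ_j''. Then: (a) for every t ∈ [0,1], ∫₀¹ (min(s,t) − s·t)·φ_j(s) ds = ψ_j(t), i.e. ψ_j is the image of φ_j under the integral operator with the Brownian-bridge covariance kernel G_B(s,t) = min(s,t) − s·t; and (b) Q_{ij} := ∫₀¹ ψ_j(s)·φ_i(s) ds = ∫₀¹ ψ_i'(s)·ψ_j'(s) ds = S_{ij}, where S is the matrix with entries S_{ij} = ∫₀¹ ψ_i'ψ_j' ds. Consequently Q = S, so the Durbin process with covariance G_B(s,t) − ψ(s)ᵀ S⁻¹ ψ(t) is the perturbation X_A of the Brownian bridge with A = Q⁻¹, i.e. a critical perturbation. -/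
open MeasureTheory Matrix intervalIntegral

/-!
Both parts are integration by parts against `ψ''`. For (a), the kernel `min(s,t) - st` is affine
in `s` on each of `[0,t]` and `[t,1]`, so integrating by parts twice on each piece leaves only
boundary terms; the `ψ'(t)` terms cancel and, since `ψ(0) = ψ(1) = 0`, what remains is `ψ(t)`.
For (b), one integration by parts moves a derivative from `ψ_i'` to `ψ_j`, whose boundary values
vanish.
-/

section IntegrationByParts

variable {f g : ℝ → ℝ}

theorem integral_mul_deriv_deriv (hf : ContDiff ℝ 2 f) (hg : ContDiff ℝ 1 g) (a b : ℝ) :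
    ∫ s in a..b, g s * deriv (deriv f) s
      = g b * deriv f b - g a * deriv f a - ∫ s in a..b, deriv g s * deriv f s :=
  integral_mul_deriv_eq_deriv_mul
    (fun x _ => (hg.differentiable one_ne_zero x).hasDerivAt)
    (fun x _ => (hf.differentiable_deriv_two x).hasDerivAt)
    (hg.continuous_deriv_one.intervalIntegrable a b)
    ((hf.deriv' (n := 1)).continuous_deriv_one.intervalIntegrable a b)

theorem integral_affine_mul_deriv_deriv (hf : ContDiff ℝ 2 f) (c d a b : ℝ) :
    ∫ s in a..b, (c * s + d) * deriv (deriv f) s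
      = (c * b + d) * deriv f b - (c * a + d) * deriv f a - c * (f b - f a) := by
  have hderiv : deriv (fun s => c * s + d) = fun _ => c := by
    ext s
    simp
  rw [integral_mul_deriv_deriv hf (by fun_prop), hderiv, intervalIntegral.integral_const_mul,
    integral_deriv_eq_sub (fun x _ => hf.differentiable two_ne_zero x)
      ((hf.continuous_deriv one_le_two).intervalIntegrable a b)]

theorem integral_mul_neg_deriv_deriv_of_eq_zero (hf : ContDiff ℝ 2 f) (hg : ContDiff ℝ 1 g)
    {a b : ℝ} (hga : g a = 0) (hgb : g b = 0) :
    ∫ s in a..b, g s * -deriv (deriv f) s = ∫ s in a..b, deriv f s * deriv g s := by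
  simp_rw [mul_neg, intervalIntegral.integral_neg, integral_mul_deriv_deriv hf hg, hga, hgb,
    mul_comm (deriv g _)]
  ring

end IntegrationByParts

theorem integral_brownianBridgeCov_mul_neg_deriv_deriv {f : ℝ → ℝ} (hf : ContDiff ℝ 2 f)
    (hf0 : f 0 = 0) (hf1 : f 1 = 0) {t : ℝ} (ht : t ∈ Set.Icc (0:ℝ) 1) :
    ∫ s in (0:ℝ)..1, (min s t - s * t) * -deriv (deriv f) s = f t := by
  have hcont : Continuous fun s => (min s t - s * t) * -deriv (deriv f) s := by
    have := (hf.deriv' (n := 1)).continuous_deriv_one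
    fun_prop
  have hleft : ∫ s in (0:ℝ)..t, (min s t - s * t) * -deriv (deriv f) s
      = ∫ s in (0:ℝ)..t, ((t - 1) * s + 0) * deriv (deriv f) s := by
    refine integral_congr fun s hs => ?_
    rw [Set.uIcc_of_le ht.1] at hs
    rw [min_eq_left hs.2]
    ring
  have hright : ∫ s in t..1, (min s t - s * t) * -deriv (deriv f) s
      = ∫ s in t..1, (t * s + -t) * deriv (deriv f) s := by
    refine integral_congr fun s hs => ?_
    rw [Set.uIcc_of_le ht.2] at hs
    rw [min_eq_right hs.1]
    ring
  rw [← integral_add_adjacent_intervals (hcont.intervalIntegrable 0 t)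
      (hcont.intervalIntegrable t 1), hleft, hright, integral_affine_mul_deriv_deriv hf,
    integral_affine_mul_deriv_deriv hf, hf0, hf1]
  ring

/-- **Theorem 4 (Durbin's processes are critical perturbations of Brownian bridge).**
If `ψ_j` are `C²` with `ψ_j(0) = ψ_j(1) = 0` and `φ_j = -ψ_j''`, then
(a) `∫₀¹ (min(s,t) - st) φ_j(s) ds = ψ_j(t)`, so `ψ_j` is the image of `φ_j` under the
Brownian-bridge covariance operator; and
(b) `Q_{ij} = ∫₀¹ ψ_j φ_i = ∫₀¹ ψ_i' ψ_j' = S_{ij}`, i.e. `Q = S`, so the Durbin process,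
whose covariance is `G_B(s,t) - ψ(s)ᵀ S⁻¹ ψ(t)`, is the perturbation with `A = Q⁻¹`, a
critical perturbation. -/
theorem durbin_is_critical
    {m : ℕ} (ψ : Fin m → ℝ → ℝ)
    (hψC2 : ∀ j, ContDiff ℝ 2 (ψ j))
    (hψ0 : ∀ j, ψ j 0 = 0) (hψ1 : ∀ j, ψ j 1 = 0)
    (φ : Fin m → ℝ → ℝ) (hφ : ∀ j s, φ j s = -(deriv (deriv (ψ j)) s))
    (Q : Matrix (Fin m) (Fin m) ℝ)
    (hQ : ∀ i j, Q i j = ∫ s in (0:ℝ)..1, ψ j s * φ i s)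
    (S : Matrix (Fin m) (Fin m) ℝ)
    (hS : ∀ i j, S i j = ∫ s in (0:ℝ)..1, deriv (ψ i) s * deriv (ψ j) s) :
    (∀ j, ∀ t ∈ Set.Icc (0:ℝ) 1,
      ∫ s in (0:ℝ)..1, (min s t - s * t) * φ j s = ψ j t) ∧
    Q = S := by
  refine ⟨fun j t ht => ?_, ?_⟩
  · simp_rw [hφ]
    exact integral_brownianBridgeCov_mul_neg_deriv_deriv (hψC2 j) (hψ0 j) (hψ1 j) ht
  · ext i j
    simp_rw [hQ, hS, hφ]
    exact integral_mul_neg_deriv_deriv_of_eq_zero (hψC2 i) ((hψC2 j).of_le one_le_two)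
      (hψ0 j) (hψ1 j)
end

section
/- (Tauberian lemma on differentiating asymptotics.) Let f : [0,∞) → ℝ be differentiable with f' non-decreasing, and suppose f(x) ∼ 𝒜·x^α·L(x)·exp(−𝒟 x^{−β}) as x → 0⁺, where α ∈ ℝ, 𝒜 > 0, β > 0, 𝒟 > 0, and L is a positive function slowly varying at zero (which may be assumed to have the Karamata form L(x) = exp(∫_B^x η(y)/y dy) with η(y) → 0, so that x·L'(x)/L(x) → 0 as x → 0⁺). Then f'(x) ∼ 𝒜·𝒟β·x^{α−β−1}·L(x)·exp(−𝒟 x^{−β}) as x → 0⁺. -/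
/-!
Write `g(x) = 𝒜 x^α L(x) exp(-𝒟 x^{-β})` and `D(x) = 𝒟 β x^{-β-1} g(x)` for the claimed
asymptotics of `f'`. As `f'` is monotone, `f` is convex, so `f'(x)` lies between the slopes of
`f` from `x` to `x (1 ∓ c x^β)`, points at distance `c x^{β+1}` from `x`. Since `L` is slowly
varying, `g(x (1 + c x^β)) ∼ exp(𝒟 β c) g(x)`, so these slopes divided by `D(x)` tend to
`(exp(± 𝒟 β c) - 1) / (± 𝒟 β c)`, and both bounds tend to `1` as `c → 0⁺`.
-/

open Filter Real Set Topology

theorem tendsto_of_eventually_between_of_tendsto {α ι β : Type*} [TopologicalSpace β]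
    [LinearOrder β] [OrderTopology β] {l : Filter α} {p : Filter ι} [p.NeBot]
    {F : α → β} {lo up : ι → α → β} {A B : ι → β} {y : β}
    (hlo : ∀ᶠ c in p, Tendsto (lo c) l (𝓝 (A c))) (hup : ∀ᶠ c in p, Tendsto (up c) l (𝓝 (B c)))
    (hA : Tendsto A p (𝓝 y)) (hB : Tendsto B p (𝓝 y))
    (hbetween : ∀ᶠ c in p, ∀ᶠ x in l, lo c x ≤ F x ∧ F x ≤ up c x) :
    Tendsto F l (𝓝 y) := by
  refine tendsto_order.2 ⟨fun b hb => ?_, fun b hb => ?_⟩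
  · obtain ⟨c, hloc, hbA, hc⟩ := (hlo.and ((hA.eventually (lt_mem_nhds hb)).and hbetween)).exists
    filter_upwards [hloc.eventually (lt_mem_nhds hbA), hc] with x hbx hx
    exact hbx.trans_le hx.1
  · obtain ⟨c, hupc, hBb, hc⟩ := (hup.and ((hB.eventually (gt_mem_nhds hb)).and hbetween)).exists
    filter_upwards [hupc.eventually (gt_mem_nhds hBb), hc] with x hxb hx
    exact hx.2.trans_lt hxb

theorem convexOn_of_hasDerivAt_of_monotoneOn {D : Set ℝ} (hD : Convex ℝ D) (hDo : IsOpen D)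
    {f f' : ℝ → ℝ} (hf : ∀ x ∈ D, HasDerivAt f (f' x) x) (hmono : MonotoneOn f' D) :
    ConvexOn ℝ D f := by
  have hderiv : EqOn (deriv f) f' D := fun x hx => (hf x hx).deriv
  refine MonotoneOn.convexOn_of_deriv hD (fun x hx => (hf x hx).continuousAt.continuousWithinAt)
    ?_ ?_ <;> rw [hDo.interior_eq]
  · exact fun x hx => (hf x hx).differentiableAt.differentiableWithinAt
  · exact hmono.congr hderiv.symm

theorem tendsto_log_comp_mul_sub_log_of_tendsto_mul_deriv_div {L u : ℝ → ℝ} {a : ℝ}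
    (ha : 0 < a) (hLpos : ∀ x ∈ Ioo 0 a, 0 < L x)
    (hLdiff : ∀ x ∈ Ioo 0 a, DifferentiableAt ℝ L x)
    (hLslow : Tendsto (fun x => x * deriv L x / L x) (𝓝[>] 0) (𝓝 0))
    (hu : Tendsto u (𝓝[>] 0) (𝓝 1)) :
    Tendsto (fun x => log (L (x * u x)) - log (L x)) (𝓝[>] 0) (𝓝 0) := by
  refine Metric.tendsto_nhds.2 fun ε hε => ?_
  have hsmall : ∀ᶠ t in 𝓝[>] 0, |t * deriv L t / L t| < ε / 4 ∧ t ∈ Ioo 0 a := by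
    filter_upwards [Metric.tendsto_nhds.1 hLslow (ε / 4) (by positivity),
      Ioo_mem_nhdsGT ha] with t ht hta
    rw [Real.dist_eq, sub_zero] at ht
    exact ⟨ht, hta⟩
  obtain ⟨δ, hδ, hδsub⟩ := mem_nhdsGT_iff_exists_Ioo_subset.1 hsmall
  filter_upwards [self_mem_nhdsWithin, hu.eventually (Ioo_mem_nhds one_half_lt_one one_lt_two),
    Ioo_mem_nhdsGT (half_pos hδ)] with x (hx : 0 < x) hux hxδ
  have hIcc : Icc (x / 2) (2 * x) ⊆ Ioo 0 δ := fun t ht =>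
    ⟨by linarith [ht.1], by linarith [ht.2, hxδ.2]⟩
  have hderiv : ∀ t ∈ Icc (x / 2) (2 * x),
      HasDerivWithinAt (fun t => log (L t)) (deriv L t / L t) (Icc (x / 2) (2 * x)) t :=
    fun t ht => (((hLdiff t (hδsub (hIcc ht)).2).hasDerivAt).log
      (hLpos t (hδsub (hIcc ht)).2).ne').hasDerivWithinAt
  have hbound : ∀ t ∈ Icc (x / 2) (2 * x), ‖deriv L t / L t‖ ≤ ε / (2 * x) := by
    intro t ht
    have ht0 : 0 < t := (hIcc ht).1
    have hη := (hδsub (hIcc ht)).1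
    rw [Real.norm_eq_abs, show deriv L t / L t = (t * deriv L t / L t) / t by field_simp,
      abs_div, abs_of_pos ht0, div_le_div_iff₀ ht0 (by positivity)]
    nlinarith [ht.1, abs_nonneg (t * deriv L t / L t)]
  have hx_mem : x ∈ Icc (x / 2) (2 * x) := ⟨by linarith, by linarith⟩
  have hxu_mem : x * u x ∈ Icc (x / 2) (2 * x) := ⟨by nlinarith [hux.1], by nlinarith [hux.2]⟩
  rw [Real.dist_eq, sub_zero]
  calc |log (L (x * u x)) - log (L x)| ≤ ε / (2 * x) * |x * u x - x| :=
        (convex_Icc _ _).norm_image_sub_le_of_norm_hasDerivWithin_le hderiv hbound hx_mem hxu_mem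
    _ = ε / 2 * |u x - 1| := by
      rw [show x * u x - x = x * (u x - 1) by ring, abs_mul, abs_of_pos hx]
      field_simp
    _ < ε := by
      have : |u x - 1| < 1 := abs_sub_lt_iff.2 ⟨by linarith [hux.2], by linarith [hux.1]⟩
      nlinarith

theorem tendsto_comp_mul_div_self_of_tendsto_mul_deriv_div {L u : ℝ → ℝ} {a : ℝ} (ha : 0 < a)
    (hLpos : ∀ x ∈ Ioo 0 a, 0 < L x) (hLdiff : ∀ x ∈ Ioo 0 a, DifferentiableAt ℝ L x)
    (hLslow : Tendsto (fun x => x * deriv L x / L x) (𝓝[>] 0) (𝓝 0))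
    (hu : Tendsto u (𝓝[>] 0) (𝓝 1)) :
    Tendsto (fun x => L (x * u x) / L x) (𝓝[>] 0) (𝓝 1) := by
  have hexp := (continuous_exp.tendsto 0).comp
    (tendsto_log_comp_mul_sub_log_of_tendsto_mul_deriv_div ha hLpos hLdiff hLslow hu)
  rw [exp_zero] at hexp
  refine hexp.congr' ?_
  filter_upwards [self_mem_nhdsWithin, hu.eventually (Ioo_mem_nhds one_half_lt_one one_lt_two),
    Ioo_mem_nhdsGT (half_pos ha)] with x (hx : 0 < x) hux hxa
  have hxu : x * u x ∈ Ioo 0 a := ⟨by nlinarith [hux.1], by nlinarith [hux.2, hxa.2]⟩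
  simp only [Function.comp_apply, exp_sub, exp_log (hLpos _ hxu),
    exp_log (hLpos x ⟨hx, by linarith [hxa.2]⟩)]

section Perturbation

variable {β : ℝ} (hβ : 0 < β) (c : ℝ)
include hβ

theorem tendsto_one_add_mul_rpow : Tendsto (fun x => 1 + c * x ^ β) (𝓝[>] 0) (𝓝 1) := by
  have h := (continuousAt_rpow_const 0 β (Or.inr hβ.le)).tendsto
  rw [zero_rpow hβ.ne'] at h
  simpa using ((h.mono_left nhdsWithin_le_nhds).const_mul c).const_add 1

theorem eventually_one_add_mul_rpow_pos : ∀ᶠ x in 𝓝[>] 0, 0 < 1 + c * x ^ β :=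
  (tendsto_one_add_mul_rpow hβ c).eventually (lt_mem_nhds one_pos)

theorem tendsto_mul_one_add_mul_rpow :
    Tendsto (fun x => x * (1 + c * x ^ β)) (𝓝[>] 0) (𝓝[>] 0) := by
  refine tendsto_nhdsWithin_of_tendsto_nhds_of_eventually_within _ ?_ ?_
  · simpa using (tendsto_nhdsWithin_of_tendsto_nhds tendsto_id).mul
      (tendsto_one_add_mul_rpow hβ c)
  · filter_upwards [self_mem_nhdsWithin, eventually_one_add_mul_rpow_pos hβ c]
      with x (hx : 0 < x) hu
    exact mul_pos hx hu

theorem tendsto_mul_one_add_mul_rpow_rpow_neg_sub (hc : c ≠ 0) :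
    Tendsto (fun x => (x * (1 + c * x ^ β)) ^ (-β) - x ^ (-β)) (𝓝[>] 0) (𝓝 (c * -β)) := by
  have hpow : HasDerivAt (fun t : ℝ => (1 + t) ^ (-β)) (-β) 0 := by
    simpa using ((hasDerivAt_id (0 : ℝ)).const_add 1).rpow_const (p := -β) (Or.inl (by simp))
  have hcx : Tendsto (fun x => c * x ^ β) (𝓝[>] 0) (𝓝[≠] 0) := by
    refine tendsto_nhdsWithin_of_tendsto_nhds_of_eventually_within _ ?_ ?_
    · simpa using (tendsto_one_add_mul_rpow hβ c).sub_const 1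
    · filter_upwards [self_mem_nhdsWithin] with x (hx : 0 < x)
      exact mul_ne_zero hc (rpow_pos_of_pos hx β).ne'
  -- `x^{-β} ((1 + c x^β)^{-β} - 1) = c · slope ((1 + ·)^{-β}) 0 (c x^β)`
  refine (((hasDerivAt_iff_tendsto_slope.1 hpow).const_mul c).comp hcx).congr' ?_
  filter_upwards [self_mem_nhdsWithin, eventually_one_add_mul_rpow_pos hβ c]
    with x (hx : 0 < x) hu
  have hxβ : 0 < x ^ β := rpow_pos_of_pos hx β
  simp only [Function.comp_apply, slope_def_field, sub_zero]
  rw [add_zero, one_rpow, mul_rpow hx.le hu.le, rpow_neg hx.le]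
  field_simp

end Perturbation

noncomputable def profile (𝒜 α β 𝒟 : ℝ) (L : ℝ → ℝ) (x : ℝ) : ℝ :=
  𝒜 * x ^ α * L x * exp (-𝒟 * x ^ (-β))

theorem profile_pos {𝒜 α β 𝒟 : ℝ} {L : ℝ → ℝ} {x : ℝ} (h𝒜 : 0 < 𝒜) (hx : 0 < x)
    (hL : 0 < L x) : 0 < profile 𝒜 α β 𝒟 L x := by
  have := rpow_pos_of_pos hx α
  unfold profile
  positivity

theorem eventually_slope_le_le_slope {f f' : ℝ → ℝ} (hf : ConvexOn ℝ (Ioi 0) f)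
    (hf' : ∀ x ∈ Ioi 0, HasDerivAt f (f' x) x) {β : ℝ} (hβ : 0 < β) {c : ℝ} (hc : 0 < c) :
    ∀ᶠ x in 𝓝[>] 0,
      slope f x (x * (1 + -c * x ^ β)) ≤ f' x ∧ f' x ≤ slope f x (x * (1 + c * x ^ β)) := by
  filter_upwards [self_mem_nhdsWithin, eventually_one_add_mul_rpow_pos hβ (-c)]
    with x (hx : 0 < x) hu
  have hcx : 0 < c * x ^ β := mul_pos hc (rpow_pos_of_pos hx β)
  refine ⟨?_, hf.le_slope_of_hasDerivAt hx (mul_pos hx (by linarith)) (by nlinarith) (hf' x hx)⟩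
  rw [slope_comm]
  exact hf.slope_le_of_hasDerivAt (mul_pos hx hu) hx (by nlinarith) (hf' x hx)

theorem tendsto_slope_exp_const_mul {k : ℝ} (hk : k ≠ 0) :
    Tendsto (fun c => slope exp 0 (k * c)) (𝓝[>] 0) (𝓝 1) := by
  have hmul : Tendsto (fun c : ℝ => k * c) (𝓝[≠] 0) (𝓝[≠] 0) := by
    simpa using ((hasDerivAt_id (0 : ℝ)).const_mul k).tendsto_nhdsNE (by simpa using hk)
  have hexp := hasDerivAt_iff_tendsto_slope.1 (hasDerivAt_exp 0)
  rw [exp_zero] at hexp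
  exact (hexp.comp hmul).mono_left (nhdsWithin_mono _ fun x hx => ne_of_gt hx)

section Profile

variable {𝒜 α β 𝒟 : ℝ} {L : ℝ → ℝ} {a : ℝ} (hβ : 0 < β) (ha : 0 < a)
  (hLpos : ∀ x ∈ Ioo 0 a, 0 < L x) (hLdiff : ∀ x ∈ Ioo 0 a, DifferentiableAt ℝ L x)
  (hLslow : Tendsto (fun x => x * deriv L x / L x) (𝓝[>] 0) (𝓝 0))
include hβ ha hLpos hLdiff hLslow

theorem tendsto_profile_comp_div_profile (h𝒜 : 𝒜 ≠ 0) {c : ℝ} (hc : c ≠ 0) :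
    Tendsto (fun x => profile 𝒜 α β 𝒟 L (x * (1 + c * x ^ β)) / profile 𝒜 α β 𝒟 L x)
      (𝓝[>] 0) (𝓝 (exp (𝒟 * β * c))) := by
  have hpow : Tendsto (fun x => (1 + c * x ^ β) ^ α) (𝓝[>] 0) (𝓝 1) := by
    have h := (continuousAt_rpow_const 1 α (Or.inl one_ne_zero)).tendsto.comp
      (tendsto_one_add_mul_rpow hβ c)
    rwa [one_rpow] at h
  have hL := tendsto_comp_mul_div_self_of_tendsto_mul_deriv_div ha hLpos hLdiff hLslow
    (tendsto_one_add_mul_rpow hβ c)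
  have hexp := (continuous_exp.tendsto _).comp
    ((tendsto_mul_one_add_mul_rpow_rpow_neg_sub hβ c hc).const_mul (-𝒟))
  convert ((hpow.mul hL).mul hexp).congr' ?_ using 2
  · rw [one_mul, one_mul]
    ring_nf
  filter_upwards [Ioo_mem_nhdsGT ha, (tendsto_mul_one_add_mul_rpow hβ c).eventually
    (Ioo_mem_nhdsGT ha), eventually_one_add_mul_rpow_pos hβ c] with x hx hs hu
  have hLx := hLpos x hx
  have hLs := hLpos _ hs
  have hxα := rpow_pos_of_pos hx.1 α
  simp only [Function.comp_apply, profile, mul_rpow hx.1.le hu.le, mul_sub, exp_sub]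
  field_simp

theorem tendsto_slope_div_profile {f : ℝ → ℝ} (h𝒜 : 0 < 𝒜) (h𝒟 : 𝒟 ≠ 0)
    (hasymp : Tendsto (fun x => f x / profile 𝒜 α β 𝒟 L x) (𝓝[>] 0) (𝓝 1))
    {c : ℝ} (hc : c ≠ 0) :
    Tendsto (fun x => slope f x (x * (1 + c * x ^ β)) /
        (𝒟 * β * x ^ (-β) / x * profile 𝒜 α β 𝒟 L x))
      (𝓝[>] 0) (𝓝 (slope exp 0 (𝒟 * β * c))) := by
  have hx_mem : ∀ᶠ x in 𝓝[>] 0, x ∈ Ioo 0 a := Ioo_mem_nhdsGT ha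
  have hs_mem : ∀ᶠ x in 𝓝[>] 0, x * (1 + c * x ^ β) ∈ Ioo 0 a :=
    (tendsto_mul_one_add_mul_rpow hβ c).eventually (Ioo_mem_nhdsGT ha)
  have hcomp : Tendsto (fun x => f (x * (1 + c * x ^ β)) / profile 𝒜 α β 𝒟 L x)
      (𝓝[>] 0) (𝓝 (exp (𝒟 * β * c))) := by
    rw [← one_mul (exp _)]
    refine ((hasymp.comp (tendsto_mul_one_add_mul_rpow hβ c)).mul
      (tendsto_profile_comp_div_profile (α := α) hβ ha hLpos hLdiff hLslow h𝒜.ne' hc)).congr' ?_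
    filter_upwards [hs_mem] with x hs
    have hgs := profile_pos (α := α) (β := β) (𝒟 := 𝒟) h𝒜 hs.1 (hLpos _ hs)
    simp only [Function.comp_apply]
    field_simp
  have hkc : 𝒟 * β * c ≠ 0 := mul_ne_zero (mul_ne_zero h𝒟 hβ.ne') hc
  convert ((hcomp.sub hasymp).div_const (𝒟 * β * c)).congr' ?_ using 2
  · simp [slope_def_field]
  filter_upwards [hx_mem] with x hx
  have hg := profile_pos (α := α) (β := β) (𝒟 := 𝒟) h𝒜 hx.1 (hLpos _ hx)
  have hx0 : 0 < x := hx.1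
  have hxβ := rpow_pos_of_pos hx0 β
  rw [slope_def_field, rpow_neg hx0.le]
  field_simp
  ring

theorem tendsto_deriv_div_profile {f f' : ℝ → ℝ} (hf : ConvexOn ℝ (Ioi 0) f)
    (hf' : ∀ x ∈ Ioi 0, HasDerivAt f (f' x) x) (h𝒜 : 0 < 𝒜) (h𝒟 : 0 < 𝒟)
    (hasymp : Tendsto (fun x => f x / profile 𝒜 α β 𝒟 L x) (𝓝[>] 0) (𝓝 1)) :
    Tendsto (fun x => f' x / (𝒟 * β * x ^ (-β) / x * profile 𝒜 α β 𝒟 L x)) (𝓝[>] 0) (𝓝 1) := by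
  have hk : 𝒟 * β ≠ 0 := (mul_pos h𝒟 hβ).ne'
  have hslope {c : ℝ} (hc : c ≠ 0) :=
    tendsto_slope_div_profile hβ ha hLpos hLdiff hLslow h𝒜 h𝒟.ne' hasymp hc
  refine tendsto_of_eventually_between_of_tendsto
    (eventually_mem_nhdsWithin.mono fun c hc => hslope (neg_ne_zero.2 (mem_Ioi.1 hc).ne'))
    (eventually_mem_nhdsWithin.mono fun c hc => hslope (mem_Ioi.1 hc).ne')
    (by simpa only [mul_neg, neg_mul] using tendsto_slope_exp_const_mul (neg_ne_zero.2 hk))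
    (tendsto_slope_exp_const_mul hk) ?_
  filter_upwards [self_mem_nhdsWithin] with c (hc : 0 < c)
  filter_upwards [eventually_slope_le_le_slope hf hf' hβ hc, self_mem_nhdsWithin,
    Ioo_mem_nhdsGT ha] with x hx_slope (hx : 0 < x) hxa
  have hg := profile_pos (α := α) (β := β) (𝒟 := 𝒟) h𝒜 hx (hLpos x hxa)
  have hD : 0 < 𝒟 * β * x ^ (-β) / x * profile 𝒜 α β 𝒟 L x := by
    have := rpow_pos_of_pos hx (-β)
    positivity
  exact ⟨div_le_div_of_nonneg_right hx_slope.1 hD.le, div_le_div_of_nonneg_right hx_slope.2 hD.le⟩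

end Profile

/-- **Tauberian lemma on differentiating asymptotics.** If `f` is differentiable on `[0,∞)`
with non-decreasing derivative `f'` and `f(x) ∼ 𝒜 x^α L(x) exp(-𝒟 x^{-β})` as `x → 0⁺`,
where `L` is slowly varying at zero (in Karamata differentiable form, i.e.
`x L'(x)/L(x) → 0`), then `f'(x) ∼ 𝒜 𝒟 β x^{α-β-1} L(x) exp(-𝒟 x^{-β})` as `x → 0⁺`. -/
theorem tauberian_differentiation
    (f f' : ℝ → ℝ)
    (hderiv : ∀ x ∈ Set.Ici (0:ℝ), HasDerivWithinAt f (f' x) (Set.Ici 0) x)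
    (hmono : MonotoneOn f' (Set.Ici (0:ℝ)))
    (𝒜 α β 𝒟 : ℝ) (h𝒜 : 0 < 𝒜) (hβ : 0 < β) (h𝒟 : 0 < 𝒟)
    (L : ℝ → ℝ) (a : ℝ) (ha : 0 < a)
    (hLpos : ∀ x ∈ Set.Ioo 0 a, 0 < L x)
    (hLdiff : ∀ x ∈ Set.Ioo (0:ℝ) a, DifferentiableAt ℝ L x)
    (hLslow : Tendsto (fun x => x * deriv L x / L x) (nhdsWithin 0 (Set.Ioi 0)) (nhds 0))
    (hasymp : Tendsto
      (fun x : ℝ => f x / (𝒜 * x ^ α * L x * Real.exp (-𝒟 * x ^ (-β))))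
      (nhdsWithin 0 (Set.Ioi 0)) (nhds 1)) :
    Tendsto
      (fun x : ℝ => f' x /
        (𝒜 * 𝒟 * β * x ^ (α - β - 1) * L x * Real.exp (-𝒟 * x ^ (-β))))
      (nhdsWithin 0 (Set.Ioi 0)) (nhds 1) := by
  have hf' : ∀ x ∈ Ioi (0 : ℝ), HasDerivAt f (f' x) x := fun x hx =>
    (hderiv x (mem_Ici.2 (le_of_lt hx))).hasDerivAt (Ici_mem_nhds hx)
  have hconv := convexOn_of_hasDerivAt_of_monotoneOn (convex_Ioi 0) isOpen_Ioi hf'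
    (hmono.mono Ioi_subset_Ici_self)
  refine (tendsto_deriv_div_profile hβ ha hLpos hLdiff hLslow hconv hf' h𝒜 h𝒟 hasymp).congr' ?_
  filter_upwards [self_mem_nhdsWithin] with x (hx : 0 < x)
  rw [show α - β - 1 = α + -β - 1 by ring, rpow_sub hx, rpow_add hx, rpow_one, profile]
  ring
end

section
/- Let m ∈ ℕ, μ₁,…,μ_m > 0, and let ξ₁,…,ξ_m be i.i.d. standard normal random variables. Let F(x) = P{Σ_{j=1}^m μ_j ξ_j² < x}. Then for every integer n with 0 ≤ n < m/2 − 1: F is (n+1) times differentiable in a neighborhood of 0 with F^{(n+1)}(0) = 0, there exists a constant C > 0 such that F^{(n+1)}(x) ∼ C·x^{m/2−1−n} as x → 0⁺, and consequently F^{(n)}(x) = o(F^{(n+1)}(x)) as x → 0⁺. -/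
/-!
For `x > 0` the substitution `y = √x • z` gives `F x = x ^ (m / 2) * Φ x` with
`Φ x = (2π) ^ (-m / 2) * ∫_{∑ μ_j z_j² < 1} exp (-x ∑ z_j² / 2) dz`, the moment generating
function of a bounded variable under a finite measure, hence smooth, and `Φ 0 > 0`; and `F = 0`
on `x ≤ 0`. Differentiating `x ^ a * Φ x` once turns `x ^ b * S x` into
`x ^ (b - 1) * (b * S x + x * S' x)`, so the `k`-th derivative is `x ^ (a - k) * S_k x` with
`S_k 0 = a (a - 1) ⋯ (a - k + 1) Φ 0 > 0`; while `a - k > 1` the extension by `0` stays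
differentiable at `0` with derivative `0`. Both asymptotic statements then follow from the
continuity of `S_n` and `S_(n+1)` at `0`, since `F⁽ⁿ⁾ / F⁽ⁿ⁺¹⁾ = x S_n / S_(n+1)`.
-/

open MeasureTheory ProbabilityTheory Filter
open Set Topology Real
open scoped NNReal Pointwise

section

-- `ContDiff` notation makes `ω` a token, and the final statement uses `ω` as a variable.
open scoped ContDiff

variable {ι : Type*} [Fintype ι]

noncomputable def rpowMulOfPos (b : ℝ) (S : ℝ → ℝ) (x : ℝ) : ℝ :=
  if 0 < x then x ^ b * S x else 0

section RpowMulOfPos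

variable {b : ℝ} {S : ℝ → ℝ}

theorem rpowMulOfPos_of_pos {x : ℝ} (hx : 0 < x) : rpowMulOfPos b S x = x ^ b * S x :=
  if_pos hx

theorem rpowMulOfPos_of_nonpos {x : ℝ} (hx : x ≤ 0) : rpowMulOfPos b S x = 0 :=
  if_neg hx.not_gt

theorem tendsto_rpowMulOfPos_nhds_zero (hS : ContinuousAt S 0) (hb : 0 < b) :
    Tendsto (rpowMulOfPos b S) (𝓝 0) (𝓝 0) := by
  have hbound : Tendsto (fun y => |y| ^ b * |S y|) (𝓝 0) (𝓝 0) := by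
    have : ContinuousAt (fun y => |y| ^ b * |S y|) 0 :=
      (continuous_abs.continuousAt.rpow_const (Or.inr hb.le)).mul hS.abs
    simpa [Real.zero_rpow hb.ne'] using this.tendsto
  refine squeeze_zero_norm (fun y => ?_) hbound
  rcases lt_or_ge 0 y with hy | hy
  · rw [rpowMulOfPos_of_pos hy, norm_mul, Real.norm_eq_abs, Real.abs_rpow_of_nonneg hy.le,
      Real.norm_eq_abs]
  · rw [rpowMulOfPos_of_nonpos hy, norm_zero]
    positivity

theorem hasDerivAt_rpowMulOfPos_of_pos {x : ℝ} (hS : DifferentiableAt ℝ S x) (hx : 0 < x) :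
    HasDerivAt (rpowMulOfPos b S)
      (rpowMulOfPos (b - 1) (fun y => b * S y + y * deriv S y) x) x := by
  have h := (Real.hasDerivAt_rpow_const (p := b) (Or.inl hx.ne')).mul hS.hasDerivAt
  have heq : rpowMulOfPos (b - 1) (fun y => b * S y + y * deriv S y) x
      = b * x ^ (b - 1) * S x + x ^ b * deriv S x := by
    rw [rpowMulOfPos_of_pos hx, Real.rpow_sub_one hx.ne']
    field_simp
  rw [heq]
  refine h.congr_of_eventuallyEq ?_
  filter_upwards [Ioi_mem_nhds hx] with y hy
  exact rpowMulOfPos_of_pos hy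

theorem hasDerivAt_rpowMulOfPos_of_neg {x : ℝ} (hx : x < 0) :
    HasDerivAt (rpowMulOfPos b S) 0 x := by
  refine (hasDerivAt_const x 0).congr_of_eventuallyEq ?_
  filter_upwards [Iio_mem_nhds hx] with y hy
  exact rpowMulOfPos_of_nonpos hy.le

theorem hasDerivAt_rpowMulOfPos_zero (hS : ContinuousAt S 0) (hb : 1 < b) :
    HasDerivAt (rpowMulOfPos b S) 0 0 := by
  rw [hasDerivAt_iff_tendsto_slope]
  refine ((tendsto_rpowMulOfPos_nhds_zero hS (sub_pos.mpr hb)).mono_left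
    nhdsWithin_le_nhds).congr fun y => ?_
  rw [slope_def_field, rpowMulOfPos_of_nonpos le_rfl, sub_zero, sub_zero]
  rcases lt_or_ge 0 y with hy | hy
  · rw [rpowMulOfPos_of_pos hy, rpowMulOfPos_of_pos hy, Real.rpow_sub_one hy.ne']
    ring
  · rw [rpowMulOfPos_of_nonpos hy, rpowMulOfPos_of_nonpos hy, zero_div]

theorem hasDerivAt_rpowMulOfPos (hS : Differentiable ℝ S) (hb : 1 < b) (x : ℝ) :
    HasDerivAt (rpowMulOfPos b S)
      (rpowMulOfPos (b - 1) (fun y => b * S y + y * deriv S y) x) x := by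
  rcases lt_trichotomy x 0 with hx | rfl | hx
  · rw [rpowMulOfPos_of_nonpos hx.le]
    exact hasDerivAt_rpowMulOfPos_of_neg hx
  · rw [rpowMulOfPos_of_nonpos le_rfl]
    exact hasDerivAt_rpowMulOfPos_zero hS.continuous.continuousAt hb
  · exact hasDerivAt_rpowMulOfPos_of_pos (hS x) hx

theorem tendsto_rpowMulOfPos_div_rpow (hS : ContinuousAt S 0) (hS0 : S 0 ≠ 0) :
    Tendsto (fun x => rpowMulOfPos b S x / (S 0 * x ^ b)) (𝓝[>] 0) (𝓝 1) := by
  have h : Tendsto (fun x => S x / S 0) (𝓝[>] 0) (𝓝 1) := by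
    simpa [hS0] using (hS.tendsto.div_const (S 0)).mono_left nhdsWithin_le_nhds
  refine h.congr' ?_
  filter_upwards [self_mem_nhdsWithin] with x (hx : 0 < x)
  rw [rpowMulOfPos_of_pos hx]
  field_simp [(Real.rpow_pos_of_pos hx b).ne']

theorem tendsto_rpowMulOfPos_add_one_div {T : ℝ → ℝ} (hS : ContinuousAt S 0)
    (hT : ContinuousAt T 0) (hT0 : T 0 ≠ 0) :
    Tendsto (fun x => rpowMulOfPos (b + 1) S x / rpowMulOfPos b T x) (𝓝[>] 0) (𝓝 0) := by
  have h : Tendsto (fun x => x * S x / T x) (𝓝 0) (𝓝 (0 * S 0 / T 0)) :=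
    (continuousAt_id.mul hS).div hT hT0
  rw [zero_mul, zero_div] at h
  refine (h.mono_left nhdsWithin_le_nhds).congr' ?_
  filter_upwards [self_mem_nhdsWithin] with x (hx : 0 < x)
  rw [rpowMulOfPos_of_pos hx, rpowMulOfPos_of_pos hx, Real.rpow_add_one hx.ne']
  field_simp [(Real.rpow_pos_of_pos hx b).ne']

end RpowMulOfPos

noncomputable def rpowDerivFactor (a : ℝ) (Φ : ℝ → ℝ) : ℕ → ℝ → ℝ
  | 0 => Φ
  | k + 1 => fun x => (a - k) * rpowDerivFactor a Φ k x + x * deriv (rpowDerivFactor a Φ k) x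

section RpowDerivFactor

variable {a : ℝ} {Φ : ℝ → ℝ}

theorem contDiff_rpowDerivFactor (hΦ : ContDiff ℝ ∞ Φ) (k : ℕ) :
    ContDiff ℝ ∞ (rpowDerivFactor a Φ k) := by
  induction k with
  | zero => exact hΦ
  | succ k ih =>
    exact (contDiff_const.mul ih).add (contDiff_id.mul (contDiff_infty_iff_deriv.mp ih).2)

theorem rpowDerivFactor_zero_pos (hΦ : 0 < Φ 0) {k : ℕ} (hk : (k : ℝ) < a + 1) :
    0 < rpowDerivFactor a Φ k 0 := by
  induction k with
  | zero => exact hΦ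
  | succ k ih =>
    push_cast at hk
    simp only [rpowDerivFactor, zero_mul, add_zero]
    exact mul_pos (by linarith) (ih (by linarith))

theorem iteratedDeriv_rpowMulOfPos (hΦ : ContDiff ℝ ∞ Φ) {k : ℕ} (hk : (k : ℝ) < a) :
    iteratedDeriv k (rpowMulOfPos a Φ) = rpowMulOfPos (a - k) (rpowDerivFactor a Φ k) := by
  induction k with
  | zero => simp [rpowDerivFactor]
  | succ k ih =>
    push_cast at hk
    have hS := (contDiff_rpowDerivFactor (a := a) hΦ k).differentiable (by simp)
    rw [iteratedDeriv_succ, ih (by linarith)]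
    funext x
    rw [(hasDerivAt_rpowMulOfPos hS (by linarith) x).deriv, sub_sub, Nat.cast_succ]
    rfl

end RpowDerivFactor

theorem contDiff_mgf_of_abs_le {α : Type*} [MeasurableSpace α] {μ : Measure α}
    [IsFiniteMeasure μ] {X : α → ℝ} {C : ℝ} (hX : AEMeasurable X μ)
    (hC : ∀ᵐ z ∂μ, |X z| ≤ C) {n : WithTop ℕ∞} : ContDiff ℝ n (mgf X μ) := by
  have hset : integrableExpSet X μ = univ := by
    refine eq_univ_of_forall fun t => ?_
    refine Integrable.of_bound (hX.const_mul t).exp.aestronglyMeasurable (Real.exp (|t| * C)) ?_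
    filter_upwards [hC] with z hz
    rw [Real.norm_eq_abs, Real.abs_exp, Real.exp_le_exp]
    calc t * X z ≤ |t * X z| := le_abs_self _
      _ = |t| * |X z| := abs_mul t (X z)
      _ ≤ |t| * C := mul_le_mul_of_nonneg_left hz (abs_nonneg t)
  have h := analyticOn_mgf (X := X) (μ := μ)
  rw [hset, interior_univ] at h
  exact h.contDiff

noncomputable def weightedSqSum (μ : ι → ℝ) (y : ι → ℝ) : ℝ :=
  ∑ i, μ i * y i ^ 2

section WeightedSqSum

variable {μ : ι → ℝ}

theorem continuous_weightedSqSum : Continuous (weightedSqSum μ) :=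
  continuous_finsetSum _ fun i _ => continuous_const.mul ((continuous_apply i).pow 2)

theorem weightedSqSum_nonneg (hμ : ∀ i, 0 < μ i) (y : ι → ℝ) : 0 ≤ weightedSqSum μ y :=
  Finset.sum_nonneg fun i _ => mul_nonneg (hμ i).le (sq_nonneg _)

theorem weightedSqSum_smul (c : ℝ) (y : ι → ℝ) :
    weightedSqSum μ (c • y) = c ^ 2 * weightedSqSum μ y := by
  simp only [weightedSqSum, Finset.mul_sum, Pi.smul_apply, smul_eq_mul]
  exact Finset.sum_congr rfl fun i _ => by ring

theorem sq_le_inv_of_weightedSqSum_lt_one (hμ : ∀ i, 0 < μ i) {y : ι → ℝ}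
    (hy : weightedSqSum μ y < 1) (i : ι) : y i ^ 2 ≤ (μ i)⁻¹ := by
  have hi : μ i * y i ^ 2 ≤ weightedSqSum μ y :=
    Finset.single_le_sum (f := fun j => μ j * y j ^ 2)
      (fun j _ => mul_nonneg (hμ j).le (sq_nonneg _)) (Finset.mem_univ i)
  rw [inv_eq_one_div, le_div_iff₀ (hμ i), mul_comm]
  linarith

theorem sum_sq_le_of_weightedSqSum_lt_one (hμ : ∀ i, 0 < μ i) {y : ι → ℝ}
    (hy : weightedSqSum μ y < 1) : ∑ i, y i ^ 2 ≤ ∑ i, (μ i)⁻¹ :=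
  Finset.sum_le_sum fun i _ => sq_le_inv_of_weightedSqSum_lt_one hμ hy i

theorem isBounded_setOf_weightedSqSum_lt_one (hμ : ∀ i, 0 < μ i) :
    Bornology.IsBounded {y | weightedSqSum μ y < 1} := by
  refine (Metric.isBounded_closedBall (x := 0) (r := √(∑ i, (μ i)⁻¹))).subset fun y hy => ?_
  rw [Metric.mem_closedBall, dist_zero_right,
    pi_norm_le_iff_of_nonneg (Real.sqrt_nonneg _)]
  intro i
  rw [Real.norm_eq_abs]
  refine Real.abs_le_sqrt ((Finset.single_le_sum (f := fun j => y j ^ 2)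
    (fun j _ => sq_nonneg _) (Finset.mem_univ i)).trans ?_)
  exact sum_sq_le_of_weightedSqSum_lt_one hμ hy

theorem smul_setOf_weightedSqSum_lt_one {c : ℝ} (hc : 0 < c) :
    c • {y | weightedSqSum μ y < 1} = {y | weightedSqSum μ y < c ^ 2} := by
  ext y
  rw [mem_smul_set_iff_inv_smul_mem₀ hc.ne', mem_ofPred_eq, mem_ofPred_eq, weightedSqSum_smul,
    inv_pow, inv_mul_lt_one₀ (by positivity)]

theorem setIntegral_weightedSqSum_lt (f : (ι → ℝ) → ℝ) {x : ℝ} (hx : 0 < x) :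
    ∫ y in {y | weightedSqSum μ y < x}, f y =
      x ^ ((Fintype.card ι : ℝ) / 2) *
        ∫ z in {z | weightedSqSum μ z < 1}, f (√x • z) := by
  have hsqrt : 0 < √x := Real.sqrt_pos.mpr hx
  have hpow : √x ^ Fintype.card ι = x ^ ((Fintype.card ι : ℝ) / 2) := by
    rw [Real.sqrt_eq_rpow, ← Real.rpow_natCast, ← Real.rpow_mul hx.le]
    ring_nf
  rw [Measure.setIntegral_comp_smul_of_pos _ _ _ hsqrt, smul_setOf_weightedSqSum_lt_one hsqrt,
    Real.sq_sqrt hx.le, Module.finrank_fintype_fun_eq_card, smul_eq_mul, ← mul_assoc, hpow,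
    mul_inv_cancel₀ (by positivity), one_mul]

end WeightedSqSum

theorem pi_gaussianReal_eq_withDensity (μ : ℝ) {v : ℝ≥0} (hv : v ≠ 0) :
    Measure.pi (fun _ : ι => gaussianReal μ v) =
      volume.withDensity (fun y => ENNReal.ofReal (∏ i, gaussianPDFReal μ v (y i))) := by
  refine Measure.pi_eq fun s hs => ?_
  set g := gaussianPDFReal μ v
  have hg : ∀ i t, 0 ≤ (s i).indicator g t :=
    fun i => indicator_nonneg fun t _ => gaussianPDFReal_nonneg μ v t
  have hint : ∀ i, Integrable ((s i).indicator g) :=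
    fun i => (integrable_gaussianPDFReal μ v).indicator (hs i)
  have hbox : (univ.pi s).indicator (fun y => ENNReal.ofReal (∏ i, g (y i)))
      = fun y => ENNReal.ofReal (∏ i, (s i).indicator g (y i)) := by
    funext y
    by_cases hy : y ∈ univ.pi s
    · rw [indicator_of_mem hy]
      exact congrArg _ (Finset.prod_congr rfl fun i _ => (indicator_of_mem (hy i trivial) g).symm)
    · obtain ⟨i, -, hi⟩ := not_forall₂.mp hy
      rw [indicator_of_notMem hy,
        Finset.prod_eq_zero (Finset.mem_univ i) (indicator_of_notMem hi g), ENNReal.ofReal_zero]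
  rw [withDensity_apply _ (MeasurableSet.univ_pi hs),
    ← lintegral_indicator (MeasurableSet.univ_pi hs), hbox, volume_pi,
    ← ofReal_integral_eq_lintegral_ofReal (Integrable.fintype_prod hint)
      (ae_of_all _ fun y => Finset.prod_nonneg fun i _ => hg i (y i)),
    integral_fintype_prod_eq_prod,
    ENNReal.ofReal_prod_of_nonneg fun i _ => integral_nonneg (hg i)]
  exact Finset.prod_congr rfl fun i _ => by
    rw [integral_indicator (hs i), gaussianReal_apply_eq_integral μ hv]

theorem prod_gaussianPDFReal (y : ι → ℝ) :
    ∏ i, gaussianPDFReal 0 1 (y i) =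
      (√(2 * π))⁻¹ ^ Fintype.card ι * Real.exp (-(∑ i, y i ^ 2) / 2) := by
  simp only [gaussianPDFReal, NNReal.coe_one, mul_one, sub_zero, Finset.prod_mul_distrib,
    Finset.prod_const, Finset.card_univ, ← Real.exp_sum, Finset.sum_div, Finset.sum_neg_distrib,
    neg_div]

section WeightedChiSq

variable {μ : ι → ℝ}

noncomputable def weightedChiSqFactor (μ : ι → ℝ) (x : ℝ) : ℝ :=
  (√(2 * π))⁻¹ ^ Fintype.card ι *
    mgf (fun z => -(∑ i, z i ^ 2) / 2) (volume.restrict {z | weightedSqSum μ z < 1}) x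

theorem measurableSet_setOf_weightedSqSum_lt (μ : ι → ℝ) (x : ℝ) :
    MeasurableSet {y | weightedSqSum μ y < x} :=
  measurableSet_lt continuous_weightedSqSum.measurable measurable_const

theorem contDiff_weightedChiSqFactor (hμ : ∀ i, 0 < μ i) :
    ContDiff ℝ ∞ (weightedChiSqFactor μ) := by
  have : IsFiniteMeasure (volume.restrict {z | weightedSqSum μ z < 1}) :=
    isFiniteMeasure_restrict.mpr (isBounded_setOf_weightedSqSum_lt_one hμ).measure_lt_top.ne
  refine contDiff_const.mul (contDiff_mgf_of_abs_le (C := (∑ i, (μ i)⁻¹) / 2)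
    (by fun_prop : Measurable fun z : ι → ℝ => -(∑ i, z i ^ 2) / 2).aemeasurable ?_)
  refine (ae_restrict_iff' (measurableSet_setOf_weightedSqSum_lt μ 1)).mpr
    (ae_of_all _ fun z hz => ?_)
  rw [abs_div, abs_neg, abs_two, abs_of_nonneg (Finset.sum_nonneg fun i _ => sq_nonneg (z i))]
  exact div_le_div_of_nonneg_right (sum_sq_le_of_weightedSqSum_lt_one hμ hz) zero_le_two

theorem weightedChiSqFactor_zero_pos (hμ : ∀ i, 0 < μ i) : 0 < weightedChiSqFactor μ 0 := by
  have hopen : IsOpen {z | weightedSqSum μ z < 1} :=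
    isOpen_lt continuous_weightedSqSum continuous_const
  have h0 : (0 : ι → ℝ) ∈ {z | weightedSqSum μ z < 1} := by simp [weightedSqSum]
  rw [weightedChiSqFactor, mgf_zero', measureReal_restrict_apply_univ, measureReal_def]
  exact mul_pos (by positivity) (ENNReal.toReal_pos (hopen.measure_pos volume ⟨0, h0⟩).ne'
    (isBounded_setOf_weightedSqSum_lt_one hμ).measure_lt_top.ne)

theorem pi_gaussianReal_setOf_weightedSqSum_lt (hμ : ∀ i, 0 < μ i) (x : ℝ) :
    (Measure.pi (fun _ : ι => gaussianReal 0 1) {y | weightedSqSum μ y < x}).toReal =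
      rpowMulOfPos ((Fintype.card ι : ℝ) / 2) (weightedChiSqFactor μ) x := by
  rcases le_or_gt x 0 with hx | hx
  · have hempty : {y | weightedSqSum μ y < x} = ∅ :=
      eq_empty_of_forall_notMem fun y hy => (weightedSqSum_nonneg hμ y).not_gt (hy.trans_le hx)
    rw [hempty, measure_empty, ENNReal.toReal_zero, rpowMulOfPos_of_nonpos hx]
  have hρ : Measurable fun y : ι → ℝ => ∏ i, gaussianPDFReal 0 1 (y i) := by fun_prop
  rw [pi_gaussianReal_eq_withDensity 0 one_ne_zero,
    withDensity_apply _ (measurableSet_setOf_weightedSqSum_lt μ x),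
    ← integral_eq_lintegral_of_nonneg_ae (ae_of_all _ fun y => Finset.prod_nonneg fun i _ =>
      gaussianPDFReal_nonneg 0 1 (y i)) hρ.aestronglyMeasurable,
    setIntegral_weightedSqSum_lt _ hx, rpowMulOfPos_of_pos hx, weightedChiSqFactor, mgf]
  congr 1
  rw [← integral_const_mul]
  refine integral_congr_ae (ae_of_all _ fun z => ?_)
  dsimp only
  rw [prod_gaussianPDFReal]
  congr 2
  simp only [Pi.smul_apply, smul_eq_mul, mul_pow, Real.sq_sqrt hx.le, ← Finset.mul_sum]
  ring

end WeightedChiSq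

theorem rpowMulOfPos_iteratedDeriv_asymptotics {a : ℝ} {Φ : ℝ → ℝ}
    (hΦ : ContDiff ℝ ∞ Φ) (hΦ0 : 0 < Φ 0) {n : ℕ} (hn : (n : ℝ) + 1 < a) :
    (∀ k ≤ n, Differentiable ℝ (iteratedDeriv k (rpowMulOfPos a Φ))) ∧
    iteratedDeriv (n + 1) (rpowMulOfPos a Φ) 0 = 0 ∧
    (∃ C > 0, Tendsto
      (fun x => iteratedDeriv (n + 1) (rpowMulOfPos a Φ) x / (C * x ^ (a - 1 - n)))
      (𝓝[>] 0) (𝓝 1)) ∧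
    Tendsto (fun x => iteratedDeriv n (rpowMulOfPos a Φ) x /
      iteratedDeriv (n + 1) (rpowMulOfPos a Φ) x) (𝓝[>] 0) (𝓝 0) := by
  set S := rpowDerivFactor a Φ
  have hS : ∀ k, ContDiff ℝ ∞ (S k) := contDiff_rpowDerivFactor hΦ
  have hderiv : ∀ k ≤ n + 1, iteratedDeriv k (rpowMulOfPos a Φ) = rpowMulOfPos (a - k) (S k) :=
    fun k hk => iteratedDeriv_rpowMulOfPos hΦ (by
      have : (k : ℝ) ≤ n + 1 := by exact_mod_cast hk
      linarith)
  have hS0 : 0 < S (n + 1) 0 := rpowDerivFactor_zero_pos hΦ0 (by push_cast; linarith)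
  have hexp : a - ((n + 1 : ℕ) : ℝ) = a - 1 - n := by push_cast; ring
  refine ⟨fun k hk x => ?_, ?_, ⟨S (n + 1) 0, hS0, ?_⟩, ?_⟩
  · have : (k : ℝ) ≤ n := by exact_mod_cast hk
    rw [hderiv k (by omega)]
    exact (hasDerivAt_rpowMulOfPos ((hS k).differentiable (by simp)) (by linarith)
      x).differentiableAt
  · rw [hderiv _ le_rfl, rpowMulOfPos_of_nonpos le_rfl]
  · rw [hderiv _ le_rfl, hexp]
    exact tendsto_rpowMulOfPos_div_rpow (hS _).continuous.continuousAt hS0.ne'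
  · rw [hderiv n (by omega), hderiv _ le_rfl, hexp, show a - n = a - 1 - n + 1 by ring]
    exact tendsto_rpowMulOfPos_add_one_div (hS _).continuous.continuousAt
      (hS _).continuous.continuousAt hS0.ne'

end

theorem finite_sum_derivatives_general
    {Ω : Type*} [MeasurableSpace Ω] (Pr : Measure Ω)
    (m : ℕ) (ξ : Fin m → Ω → ℝ) (hmeas : ∀ j, Measurable (ξ j))
    (hindep : iIndepFun ξ Pr)
    (hgauss : ∀ j, Measure.map (ξ j) Pr = gaussianReal 0 1)
    (μ : Fin m → ℝ) (hμpos : ∀ j, 0 < μ j)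
    (F : ℝ → ℝ)
    (hF : ∀ x, F x = (Pr {ω | ∑ j, μ j * (ξ j ω) ^ 2 < x}).toReal)
    (n : ℕ) (hn : (n : ℝ) < (m : ℝ) / 2 - 1) :
    (∃ δ > (0:ℝ), ∀ x ∈ Set.Ioo (-δ) δ, ∀ k ≤ n,
      DifferentiableAt ℝ (iteratedDeriv k F) x) ∧
    iteratedDeriv (n + 1) F 0 = 0 ∧
    (∃ C > (0:ℝ), Tendsto
      (fun x : ℝ => iteratedDeriv (n + 1) F x / (C * x ^ ((m : ℝ) / 2 - 1 - n)))
      (nhdsWithin 0 (Set.Ioi 0)) (nhds 1)) ∧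
    Tendsto (fun x => iteratedDeriv n F x / iteratedDeriv (n + 1) F x)
      (nhdsWithin 0 (Set.Ioi 0)) (nhds 0) := by
  have hlaw : Pr.map (fun ω j => ξ j ω) = Measure.pi fun _ => gaussianReal 0 1 := by
    rw [hindep.map_fun_eq_pi_map fun j => (hmeas j).aemeasurable]
    simp_rw [hgauss]
  have hFeq : F = rpowMulOfPos ((m : ℝ) / 2) (weightedChiSqFactor μ) := by
    funext x
    have hx := pi_gaussianReal_setOf_weightedSqSum_lt hμpos x
    rw [Fintype.card_fin] at hx
    rw [hF, ← hx, ← hlaw,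
      Measure.map_apply (measurable_pi_lambda _ hmeas) (measurableSet_setOf_weightedSqSum_lt μ x)]
    rfl
  subst hFeq
  obtain ⟨hdiff, hzero, hequiv, hlittle⟩ :=
    rpowMulOfPos_iteratedDeriv_asymptotics (a := (m : ℝ) / 2) (n := n)
      (contDiff_weightedChiSqFactor hμpos) (weightedChiSqFactor_zero_pos hμpos) (by linarith)
  exact ⟨⟨1, one_pos, fun x _ k hk => hdiff k hk x⟩, hzero, hequiv, hlittle⟩

/-- For a finite sum `F(x) = P{∑_{j=1}^m μ_j ξ_j² < x}` with `ξ_j` i.i.d. standard normal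
and every `n < m/2 - 1`: `F` is `(n+1)` times differentiable near `0`, `F⁽ⁿ⁺¹⁾(0) = 0`,
`F⁽ⁿ⁺¹⁾(x) ∼ C x^{m/2-1-n}` as `x → 0⁺` for some `C > 0`, and consequently
`F⁽ⁿ⁾(x) = o(F⁽ⁿ⁺¹⁾(x))` as `x → 0⁺`. -/
theorem finite_sum_derivatives
    {Ω : Type*} [MeasurableSpace Ω] (Pr : Measure Ω) [IsProbabilityMeasure Pr]
    (m : ℕ) (ξ : Fin m → Ω → ℝ) (hmeas : ∀ j, Measurable (ξ j))
    (hindep : iIndepFun ξ Pr)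
    (hgauss : ∀ j, Measure.map (ξ j) Pr = gaussianReal 0 1)
    (μ : Fin m → ℝ) (hμpos : ∀ j, 0 < μ j)
    (F : ℝ → ℝ)
    (hF : ∀ x, F x = (Pr {ω | ∑ j, μ j * (ξ j ω) ^ 2 < x}).toReal)
    (n : ℕ) (hn : (n : ℝ) < (m : ℝ) / 2 - 1) :
    (∃ δ > (0:ℝ), ∀ x ∈ Set.Ioo (-δ) δ, ∀ k ≤ n,
      DifferentiableAt ℝ (iteratedDeriv k F) x) ∧
    iteratedDeriv (n + 1) F 0 = 0 ∧
    (∃ C > (0:ℝ), Tendsto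
      (fun x : ℝ => iteratedDeriv (n + 1) F x / (C * x ^ ((m : ℝ) / 2 - 1 - n)))
      (nhdsWithin 0 (Set.Ioi 0)) (nhds 1)) ∧
    Tendsto (fun x => iteratedDeriv n F x / iteratedDeriv (n + 1) F x)
      (nhdsWithin 0 (Set.Ioi 0)) (nhds 0) :=
  finite_sum_derivatives_general Pr m ξ hmeas hindep hgauss μ hμpos F hF n hn
end

section
/- Let L : (0,a) → (0,∞) be differentiable with lim_{x→0⁺} x·L'(x)/L(x) = 0. Then for every c > 0 and β > 0, lim_{x→0⁺} L(x + c·x^{β+1})/L(x) = 1. -/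
/-!
Where `|t L'(t) / L(t)| ≤ 1`, the derivative of `log ∘ L` is bounded by `1 / t`, so by the mean
value inequality `|log L(y) - log L(x)| ≤ |y - x| / min x y`. For `y = g x` with `g x / x → 1`
this is at most `2 |g x / x - 1| → 0`, hence `L (g x) / L x → 1`; the shift
`x + c x^{β+1} = x (1 + c x^β)` is such a `g`.
-/

open Filter Set Topology Real

theorem abs_log_sub_log_le_of_abs_mul_logDeriv_le {L : ℝ → ℝ} {x y M : ℝ} (hx : 0 < x) (hy : 0 < y)
    (hpos : ∀ t ∈ uIcc x y, 0 < L t) (hdiff : ∀ t ∈ uIcc x y, DifferentiableAt ℝ L t)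
    (hM : ∀ t ∈ uIcc x y, |t * deriv L t / L t| ≤ M) :
    |log (L y) - log (L x)| ≤ M / min x y * |y - x| := by
  refine (convex_uIcc x y).norm_image_sub_le_of_norm_deriv_le (f := fun t => log (L t))
    (fun t ht => (hdiff t ht).log (hpos t ht).ne') (fun t ht => ?_) left_mem_uIcc right_mem_uIcc
  have hmin : 0 < min x y := lt_min hx hy
  have hmin_le : min x y ≤ t := ht.1
  have ht0 : 0 < t := hmin.trans_le hmin_le
  have hM0 : 0 ≤ M := (abs_nonneg _).trans (hM t ht)
  rw [deriv.log (hdiff t ht) (hpos t ht).ne', norm_eq_abs]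
  calc |deriv L t / L t| = |t * deriv L t / L t| / t := by
        rw [mul_div_assoc, abs_mul, abs_of_pos ht0, mul_div_cancel_left₀ _ ht0.ne']
    _ ≤ M / t := by gcongr; exact hM t ht
    _ ≤ M / min x y := by gcongr

theorem uIcc_subset_Ioo_of_div_mem_Ioo {x y δ : ℝ} (hx : x ∈ Ioo 0 (δ / 2))
    (hy : y / x ∈ Ioo (1 / 2) 2) : uIcc x y ⊆ Ioo 0 δ := by
  obtain ⟨hx0, hxδ⟩ := hx
  rw [mem_Ioo, lt_div_iff₀ hx0, div_lt_iff₀ hx0] at hy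
  calc uIcc x y ⊆ Icc (x / 2) (2 * x) :=
        uIcc_subset_Icc ⟨by linarith, by linarith⟩ ⟨by linarith, by linarith⟩
    _ ⊆ Ioo 0 δ := Icc_subset_Ioo (by positivity) (by linarith)

theorem abs_log_sub_log_le_two_mul_abs_div_sub_one {L : ℝ → ℝ} {x y δ : ℝ}
    (hL : ∀ t ∈ Ioo 0 δ, 0 < L t ∧ DifferentiableAt ℝ L t ∧ |t * deriv L t / L t| ≤ 1)
    (hx : x ∈ Ioo 0 (δ / 2)) (hy : y / x ∈ Ioo (1 / 2) 2) :
    |log (L y) - log (L x)| ≤ 2 * |y / x - 1| := by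
  have hsub := uIcc_subset_Ioo_of_div_mem_Ioo hx hy
  have hx0 : 0 < x := hx.1
  have hmin : x / 2 ≤ min x y := by
    have := hy.1
    rw [lt_div_iff₀ hx0] at this
    exact le_min (by linarith) (by linarith)
  calc |log (L y) - log (L x)| ≤ 1 / min x y * |y - x| :=
        abs_log_sub_log_le_of_abs_mul_logDeriv_le hx0 (hsub right_mem_uIcc).1
          (fun t ht => (hL t (hsub ht)).1) (fun t ht => (hL t (hsub ht)).2.1)
          (fun t ht => (hL t (hsub ht)).2.2)
    _ ≤ 1 / (x / 2) * |y - x| := by gcongr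
    _ = 2 * |y / x - 1| := by
        rw [div_sub_one hx0.ne', abs_div, abs_of_pos hx0]
        field_simp

theorem tendsto_div_of_tendsto_div_self {L g : ℝ → ℝ} {a : ℝ} (ha : 0 < a)
    (hLpos : ∀ x ∈ Ioo 0 a, 0 < L x) (hLdiff : ∀ x ∈ Ioo 0 a, DifferentiableAt ℝ L x)
    (hLslow : Tendsto (fun x => x * deriv L x / L x) (𝓝[>] 0) (𝓝 0))
    (hg : Tendsto (fun x => g x / x) (𝓝[>] 0) (𝓝 1)) :
    Tendsto (fun x => L (g x) / L x) (𝓝[>] 0) (𝓝 1) := by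
  obtain ⟨δ, hδ, hL⟩ : ∃ δ > 0, ∀ t ∈ Ioo 0 δ,
      0 < L t ∧ DifferentiableAt ℝ L t ∧ |t * deriv L t / L t| ≤ 1 := by
    have hsmall : ∀ᶠ t in 𝓝[>] 0, t ∈ Ioo 0 a ∧ |t * deriv L t / L t - 0| < 1 :=
      Eventually.and (Ioo_mem_nhdsGT ha) (hLslow.eventually (eventually_abs_sub_lt 0 one_pos))
    obtain ⟨δ, hδ, hsub⟩ := mem_nhdsGT_iff_exists_Ioo_subset.1 hsmall
    refine ⟨δ, hδ, fun t ht => ?_⟩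
    obtain ⟨hta, hbound⟩ := hsub ht
    exact ⟨hLpos t hta, hLdiff t hta, by simpa using hbound.le⟩
  have hnear : ∀ᶠ x in 𝓝[>] 0, x ∈ Ioo 0 (δ / 2) ∧ g x / x ∈ Ioo (1 / 2) 2 :=
    Eventually.and (Ioo_mem_nhdsGT (half_pos hδ)) (hg (Ioo_mem_nhds (by norm_num) (by norm_num)))
  have hlog : Tendsto (fun x => log (L (g x)) - log (L x)) (𝓝[>] 0) (𝓝 0) := by
    refine squeeze_zero_norm'
      (hnear.mono fun x hx => abs_log_sub_log_le_two_mul_abs_div_sub_one hL hx.1 hx.2) ?_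
    simpa using ((hg.sub_const 1).abs.const_mul 2)
  have hexp := (continuous_exp.tendsto 0).comp hlog
  rw [exp_zero] at hexp
  refine hexp.congr' ?_
  filter_upwards [hnear] with x ⟨hx, hgx⟩
  have hsub := uIcc_subset_Ioo_of_div_mem_Ioo hx hgx
  rw [Function.comp_apply, exp_sub, exp_log (hL _ (hsub left_mem_uIcc)).1,
    exp_log (hL _ (hsub right_mem_uIcc)).1]

theorem tendsto_add_mul_rpow_div_self {c β : ℝ} (hβ : 0 < β) :
    Tendsto (fun x : ℝ => (x + c * x ^ (β + 1)) / x) (𝓝[>] 0) (𝓝 1) := by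
  have hpow : Tendsto (fun x : ℝ => 1 + c * x ^ β) (𝓝[>] 0) (𝓝 1) := by
    have := ((continuousAt_rpow_const 0 β (Or.inr hβ.le)).tendsto.const_mul c).const_add 1
    simpa [zero_rpow hβ.ne'] using this.mono_left nhdsWithin_le_nhds
  refine hpow.congr' ?_
  filter_upwards [self_mem_nhdsWithin] with x (hx : 0 < x)
  rw [rpow_add_one hx.ne']
  field_simp

/-- If `L` is positive and differentiable on `(0,a)` with `x L'(x)/L(x) → 0` as `x → 0⁺`
(the Karamata form of slow variation at zero), then for all `c > 0` and `β > 0` one has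
`L(x + c x^{β+1}) / L(x) → 1` as `x → 0⁺`. -/
theorem slowly_varying_shift
    (L : ℝ → ℝ) (a : ℝ) (ha : 0 < a)
    (hLpos : ∀ x ∈ Set.Ioo 0 a, 0 < L x)
    (hLdiff : ∀ x ∈ Set.Ioo (0:ℝ) a, DifferentiableAt ℝ L x)
    (hLslow : Tendsto (fun x => x * deriv L x / L x) (nhdsWithin 0 (Set.Ioi 0)) (nhds 0)) :
    ∀ c > (0:ℝ), ∀ β > (0:ℝ),
      Tendsto (fun x : ℝ => L (x + c * x ^ (β + 1)) / L x)
        (nhdsWithin 0 (Set.Ioi 0)) (nhds 1) := fun _ _ _ hβ =>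
  tendsto_div_of_tendsto_div_self ha hLpos hLdiff hLslow (tendsto_add_mul_rpow_div_self hβ)
end

section
/- Let 𝒟 > 0, d > 0 and γ ∈ ℝ. Then, as r → 0⁺, ∫₀^r x^γ · exp(−𝒟 x^{−d}) · (r−x)^{−1/2} dx ∼ sqrt(π/(𝒟d)) · r^{γ+(d+1)/2} · exp(−𝒟 r^{−d}). -/
/-!
Near `x = r` the exponent `-𝒟 x^{-d}` is `-𝒟 r^{-d} - l (r - x)` to first order, with
`l = 𝒟 d r^{-d-1}`, so the integral should behave like
`r^γ e^{-𝒟 r^{-d}} ∫₀^∞ e^{-l t} t^{-1/2} dt = r^γ e^{-𝒟 r^{-d}} √(π / l)`, the claimed asymptote.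
To make this rigorous fix `δ ∈ (0, 1)`. On `[δ r, r]` the mean value theorem for `x^{-d}` traps
the exponent between the linearisations with the slopes at `r` and at `δ r`, and `x^γ` lies
between `δ^{±|γ|} r^γ`; integrating gives the asymptote times `δ^{-|γ|}` from above and times
`δ^{|γ| + (d+1)/2} (1 - O(e^{-c r^{-d}}))` from below, the error coming from truncating the
Gamma integral. On `(0, δ r]` the weight `x^γ e^{-𝒟 x^{-d}}` is increasing once `r` is small, so
that piece is smaller than the asymptote by a factor `e^{-𝒟 (δ^{-d} - 1) r^{-d}}` up to powers
of `r`. Letting `δ → 1` finishes.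
-/

open Filter

namespace AbelAsymptotics

open Real MeasureTheory Set Topology

-- At `t = 0` both sides vanish, since `0 ^ (-1/2) = 0` in Mathlib.
lemma div_sqrt_eq_mul_rpow (a : ℝ) {t : ℝ} (ht : 0 ≤ t) : a / √t = a * t ^ (-(1 / 2 : ℝ)) := by
  rw [sqrt_eq_rpow, rpow_neg ht, div_eq_mul_inv]

section Kernel

variable {l : ℝ}

lemma integrableOn_exp_neg_mul_div_sqrt (hl : 0 < l) :
    IntegrableOn (fun t => exp (-(l * t)) / √t) (Ioi 0) := by
  refine (integrableOn_rpow_mul_exp_neg_mul_rpow (s := -(1 / 2)) (by norm_num) one_pos hl).congr_fun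
    (fun t ht => ?_) measurableSet_Ioi
  simp only [rpow_one, neg_mul]
  rw [div_sqrt_eq_mul_rpow _ (le_of_lt ht), mul_comm]

lemma integral_exp_neg_mul_div_sqrt_Ioi (hl : 0 < l) :
    ∫ t in Ioi 0, exp (-(l * t)) / √t = √(π / l) := by
  have hΓ := integral_rpow_mul_exp_neg_mul_Ioi one_half_pos hl
  rw [Gamma_one_half_eq, ← sqrt_eq_rpow, ← sqrt_mul (by positivity), one_div_mul_eq_div] at hΓ
  rw [← hΓ]
  refine setIntegral_congr_fun measurableSet_Ioi fun t ht => ?_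
  rw [div_sqrt_eq_mul_rpow _ (le_of_lt ht), mul_comm]
  norm_num

lemma integral_exp_neg_mul_div_sqrt_le (hl : 0 < l) {S : ℝ} (hS : 0 ≤ S) :
    ∫ t in 0..S, exp (-(l * t)) / √t ≤ √(π / l) := by
  rw [← integral_exp_neg_mul_div_sqrt_Ioi hl, intervalIntegral.integral_of_le hS]
  refine setIntegral_mono_set (integrableOn_exp_neg_mul_div_sqrt hl) ?_
    Ioc_subset_Ioi_self.eventuallyLE
  exact (ae_restrict_iff' measurableSet_Ioi).2 (ae_of_all _ fun t _ => by positivity)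

lemma le_integral_exp_neg_mul_div_sqrt (hl : 0 < l) {S : ℝ} (hS : 0 ≤ S) :
    √(π / l) * (1 - √2 * exp (-(l * S) / 2)) ≤ ∫ t in 0..S, exp (-(l * t)) / √t := by
  have hl2 : 0 < l / 2 := half_pos hl
  have hint := integrableOn_exp_neg_mul_div_sqrt hl
  have hsplit : √(π / l) =
      (∫ t in 0..S, exp (-(l * t)) / √t) + ∫ t in Ioi S, exp (-(l * t)) / √t := by
    rw [← integral_exp_neg_mul_div_sqrt_Ioi hl, intervalIntegral.integral_of_le hS,
      ← setIntegral_union (Ioc_disjoint_Ioi le_rfl) measurableSet_Ioi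
        (hint.mono_set Ioc_subset_Ioi_self) (hint.mono_set (Ioi_subset_Ioi hS)),
      Ioc_union_Ioi_eq_Ioi hS]
  -- on `t > S`, trade half of the decay rate for the factor `exp (-(l * S) / 2)`
  have htail : ∫ t in Ioi S, exp (-(l * t)) / √t ≤ exp (-(l * S) / 2) * √(π / (l / 2)) := by
    have hint2 := (integrableOn_exp_neg_mul_div_sqrt hl2).mono_set (Ioi_subset_Ioi hS)
    calc ∫ t in Ioi S, exp (-(l * t)) / √t
        ≤ ∫ t in Ioi S, exp (-(l * S) / 2) * (exp (-(l / 2 * t)) / √t) := by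
          refine setIntegral_mono_on (hint.mono_set (Ioi_subset_Ioi hS)) (hint2.const_mul _)
            measurableSet_Ioi fun t ht => ?_
          rw [← mul_div_assoc, ← exp_add]
          gcongr
          nlinarith [mem_Ioi.1 ht]
      _ ≤ exp (-(l * S) / 2) * ∫ t in Ioi 0, exp (-(l / 2 * t)) / √t := by
          rw [integral_const_mul]
          refine mul_le_mul_of_nonneg_left ?_ (exp_nonneg _)
          exact setIntegral_mono_set (integrableOn_exp_neg_mul_div_sqrt hl2)
            ((ae_restrict_iff' measurableSet_Ioi).2 (ae_of_all _ fun t _ => by positivity))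
            (Ioi_subset_Ioi hS).eventuallyLE
      _ = exp (-(l * S) / 2) * √(π / (l / 2)) := by rw [integral_exp_neg_mul_div_sqrt_Ioi hl2]
  have h2 : √(π / (l / 2)) = √2 * √(π / l) := by
    rw [← sqrt_mul zero_le_two]
    congr 1
    field_simp
  rw [h2] at htail
  linarith

end Kernel

noncomputable def abelTransform (f : ℝ → ℝ) (r : ℝ) : ℝ := ∫ x in 0..r, f x / √(r - x)

section AbelTransform

variable {f : ℝ → ℝ} {a r C l : ℝ}

lemma intervalIntegrable_div_sqrt_sub (hf : Measurable f) (hr : 0 ≤ r)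
    (hbound : ∀ x ∈ Ioc 0 r, ‖f x‖ ≤ C) :
    IntervalIntegrable (fun x => f x / √(r - x)) volume 0 r := by
  have hpow : IntervalIntegrable (fun t : ℝ => t ^ (-(1 / 2 : ℝ))) volume 0 r :=
    intervalIntegral.intervalIntegrable_rpow' (by norm_num)
  have hkernel : IntervalIntegrable (fun x => C * (r - x) ^ (-(1 / 2 : ℝ))) volume 0 r := by
    simpa using (hpow.comp_sub_left r).symm.const_mul C
  refine hkernel.mono_fun (hf.div (by fun_prop)).aestronglyMeasurable ?_
  rw [uIoc_of_le hr]
  refine (ae_restrict_iff' measurableSet_Ioc).2 (ae_of_all _ fun x hx => ?_)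
  have hrx : 0 ≤ r - x := sub_nonneg.2 hx.2
  refine le_trans ?_ (le_norm_self _)
  dsimp only
  rw [norm_div, norm_of_nonneg (sqrt_nonneg _), div_sqrt_eq_mul_rpow _ hrx]
  exact mul_le_mul_of_nonneg_right (hbound x hx) (rpow_nonneg hrx _)

lemma intervalIntegrable_exp_neg_mul_div_sqrt_sub (hl : 0 < l) (har : a ≤ r) :
    IntervalIntegrable (fun x => exp (-(l * (r - x))) / √(r - x)) volume a r := by
  have h := (intervalIntegrable_iff_integrableOn_Ioc_of_le (sub_nonneg.2 har)).2
    ((integrableOn_exp_neg_mul_div_sqrt hl).mono_set Ioc_subset_Ioi_self)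
  simpa using (h.comp_sub_left r).symm

lemma integral_exp_neg_mul_div_sqrt_sub (a r l C : ℝ) :
    ∫ x in a..r, C * (exp (-(l * (r - x))) / √(r - x)) =
      C * ∫ t in 0..r - a, exp (-(l * t)) / √t := by
  rw [intervalIntegral.integral_const_mul, intervalIntegral.integral_comp_sub_left
    (fun t => exp (-(l * t)) / √t), sub_self]

lemma integral_div_sqrt_sub_le (hl : 0 < l) (hC : 0 ≤ C) (har : a ≤ r)
    (hf : IntervalIntegrable (fun x => f x / √(r - x)) volume a r)
    (hle : ∀ x ∈ Icc a r, f x ≤ C * exp (-(l * (r - x)))) :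
    ∫ x in a..r, f x / √(r - x) ≤ C * √(π / l) :=
  calc ∫ x in a..r, f x / √(r - x)
      ≤ ∫ x in a..r, C * (exp (-(l * (r - x))) / √(r - x)) := by
        refine intervalIntegral.integral_mono_on har hf
          ((intervalIntegrable_exp_neg_mul_div_sqrt_sub hl har).const_mul C) fun x hx => ?_
        rw [← mul_div_assoc]
        exact div_le_div_of_nonneg_right (hle x hx) (sqrt_nonneg _)
    _ ≤ C * √(π / l) := by
        rw [integral_exp_neg_mul_div_sqrt_sub]
        exact mul_le_mul_of_nonneg_left (integral_exp_neg_mul_div_sqrt_le hl (sub_nonneg.2 har)) hC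

lemma le_integral_div_sqrt_sub (hl : 0 < l) (hC : 0 ≤ C) (har : a ≤ r)
    (hf : IntervalIntegrable (fun x => f x / √(r - x)) volume a r)
    (hle : ∀ x ∈ Icc a r, C * exp (-(l * (r - x))) ≤ f x) :
    C * √(π / l) * (1 - √2 * exp (-(l * (r - a)) / 2)) ≤ ∫ x in a..r, f x / √(r - x) :=
  calc C * √(π / l) * (1 - √2 * exp (-(l * (r - a)) / 2))
      ≤ ∫ x in a..r, C * (exp (-(l * (r - x))) / √(r - x)) := by
        rw [integral_exp_neg_mul_div_sqrt_sub, mul_assoc]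
        exact mul_le_mul_of_nonneg_left (le_integral_exp_neg_mul_div_sqrt hl (sub_nonneg.2 har)) hC
    _ ≤ ∫ x in a..r, f x / √(r - x) := by
        refine intervalIntegral.integral_mono_on har
          ((intervalIntegrable_exp_neg_mul_div_sqrt_sub hl har).const_mul C) hf fun x hx => ?_
        rw [← mul_div_assoc]
        exact div_le_div_of_nonneg_right (hle x hx) (sqrt_nonneg _)

lemma integral_div_sqrt_sub_le_of_monotoneOn (ha : 0 ≤ a) (har : a < r)
    (hf : IntervalIntegrable (fun x => f x / √(r - x)) volume 0 a)
    (hmono : MonotoneOn f (Ioc 0 a)) (hf0 : ∀ x ∈ Ioc 0 a, 0 ≤ f x) :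
    ∫ x in 0..a, f x / √(r - x) ≤ a * (f a / √(r - a)) := by
  calc ∫ x in 0..a, f x / √(r - x)
      ≤ ∫ _ in 0..a, f a / √(r - a) := by
        refine intervalIntegral.integral_mono_on_of_le_Ioo ha hf intervalIntegrable_const
          fun x hx => ?_
        have haa : a ∈ Ioc 0 a := ⟨hx.1.trans hx.2, le_rfl⟩
        exact div_le_div₀ (hf0 a haa) (hmono (Ioo_subset_Ioc_self hx) haa hx.2.le)
          (sqrt_pos.2 (sub_pos.2 har)) (sqrt_le_sqrt (by linarith [hx.2]))
    _ = a * (f a / √(r - a)) := by simp [mul_div_assoc]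

end AbelTransform

section Rpow

variable {d δ x y r c : ℝ}

lemma exists_rpow_neg_sub_rpow_neg_eq (hx : 0 < x) (hxr : x < r) :
    ∃ ξ ∈ Ioo x r, x ^ (-d) - r ^ (-d) = d * ξ ^ (-d - 1) * (r - x) := by
  have hderiv : ∀ t ∈ Ioo x r, HasDerivAt (fun t => t ^ (-d)) (-d * t ^ (-d - 1)) t :=
    fun t ht => hasDerivAt_rpow_const (Or.inl (hx.trans ht.1).ne')
  obtain ⟨ξ, hξ, h⟩ := exists_hasDerivAt_eq_slope _ _ hxr
    (fun t ht => (continuousAt_rpow_const _ _ (Or.inl (hx.trans_le ht.1).ne')).continuousWithinAt)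
    hderiv
  refine ⟨ξ, hξ, ?_⟩
  rw [eq_div_iff (sub_pos.2 hxr).ne'] at h
  linarith

lemma le_rpow_neg_sub_rpow_neg (hd : 0 ≤ d) (hx : 0 < x) (hxr : x ≤ r) :
    d * r ^ (-d - 1) * (r - x) ≤ x ^ (-d) - r ^ (-d) := by
  rcases hxr.eq_or_lt with rfl | hxr
  · simp
  obtain ⟨ξ, hξ, h⟩ := exists_rpow_neg_sub_rpow_neg_eq (d := d) hx hxr
  rw [h]
  refine mul_le_mul_of_nonneg_right (mul_le_mul_of_nonneg_left ?_ hd) (sub_nonneg.2 hxr.le)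
  exact rpow_le_rpow_of_nonpos (hx.trans hξ.1) hξ.2.le (by linarith)

lemma rpow_neg_sub_rpow_neg_le (hd : 0 ≤ d) (hc : 0 < c) (hcx : c ≤ x) (hxr : x ≤ r) :
    x ^ (-d) - r ^ (-d) ≤ d * c ^ (-d - 1) * (r - x) := by
  rcases hxr.eq_or_lt with rfl | hxr
  · simp
  obtain ⟨ξ, hξ, h⟩ := exists_rpow_neg_sub_rpow_neg_eq (d := d) (hc.trans_le hcx) hxr
  rw [h]
  refine mul_le_mul_of_nonneg_right (mul_le_mul_of_nonneg_left ?_ hd) (sub_nonneg.2 hxr.le)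
  exact rpow_le_rpow_of_nonpos hc (hcx.trans hξ.1.le) (by linarith)

lemma rpow_le_rpow_neg_abs (γ : ℝ) (hδ : 0 < δ) (hδy : δ ≤ y) (hy : y ≤ 1) :
    y ^ γ ≤ δ ^ (-|γ|) := by
  rcases le_or_gt 0 γ with hγ | hγ
  · exact (rpow_le_one (hδ.le.trans hδy) hy hγ).trans
      (one_le_rpow_of_pos_of_le_one_of_nonpos hδ (hδy.trans hy) (by simp))
  · rw [abs_of_neg hγ, neg_neg]
    exact rpow_le_rpow_of_nonpos hδ hδy hγ.le

lemma rpow_abs_le_rpow (γ : ℝ) (hδ : 0 < δ) (hδy : δ ≤ y) (hy : y ≤ 1) : δ ^ |γ| ≤ y ^ γ := by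
  rcases le_or_gt 0 γ with hγ | hγ
  · rw [abs_of_nonneg hγ]
    exact rpow_le_rpow hδ.le hδy hγ
  · exact (rpow_le_one hδ.le (hδy.trans hy) (abs_nonneg γ)).trans
      (one_le_rpow_of_pos_of_le_one_of_nonpos (hδ.trans_le hδy) hy hγ.le)

end Rpow

noncomputable def weight (𝒟 d γ x : ℝ) : ℝ := x ^ γ * exp (-𝒟 * x ^ (-d))

section Weight

variable {𝒟 d γ δ r x : ℝ}

lemma weight_nonneg (hx : 0 ≤ x) : 0 ≤ weight 𝒟 d γ x := by
  unfold weight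
  positivity

lemma measurable_weight : Measurable (weight 𝒟 d γ) := by
  unfold weight
  fun_prop

lemma weight_eq_exp (hx : 0 < x) : weight 𝒟 d γ x = exp (γ * log x - 𝒟 * x ^ (-d)) := by
  rw [weight, rpow_def_of_pos hx, ← exp_add, mul_comm γ, neg_mul, sub_eq_add_neg]

lemma hasDerivAt_log_weight (hx : 0 < x) :
    HasDerivAt (fun t => γ * log t - 𝒟 * t ^ (-d)) ((γ + 𝒟 * d * x ^ (-d)) / x) x := by
  refine (((hasDerivAt_log hx.ne').const_mul γ).sub
    ((hasDerivAt_rpow_const (p := -d) (Or.inl hx.ne')).const_mul 𝒟)).congr_deriv ?_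
  rw [rpow_sub_one hx.ne']
  field_simp
  ring

lemma weight_monotoneOn (h𝒟 : 0 ≤ 𝒟) (hd : 0 ≤ d) {ρ : ℝ} (hρ : |γ| ≤ 𝒟 * d * ρ ^ (-d)) :
    MonotoneOn (weight 𝒟 d γ) (Ioc 0 ρ) := by
  have hlog : MonotoneOn (fun t => γ * log t - 𝒟 * t ^ (-d)) (Ioc 0 ρ) := by
    refine monotoneOn_of_hasDerivWithinAt_nonneg (convex_Ioc 0 ρ)
      (fun t ht => (hasDerivAt_log_weight ht.1).continuousAt.continuousWithinAt)
      (fun t ht => (hasDerivAt_log_weight (interior_subset ht).1).hasDerivWithinAt) ?_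
    rw [interior_Ioc]
    intro t ht
    have hρt : ρ ^ (-d) ≤ t ^ (-d) := rpow_le_rpow_of_nonpos ht.1 ht.2.le (neg_nonpos.2 hd)
    have : 0 ≤ γ + 𝒟 * d * t ^ (-d) := by
      nlinarith [neg_abs_le γ, mul_nonneg h𝒟 hd]
    exact div_nonneg this ht.1.le
  exact (exp_monotone.comp_monotoneOn hlog).congr fun t ht => (weight_eq_exp ht.1).symm

lemma weight_le_of_mem_Icc (h𝒟 : 0 ≤ 𝒟) (hd : 0 ≤ d) (hδ : 0 < δ) (hr : 0 < r)
    (hx : x ∈ Icc (δ * r) r) :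
    weight 𝒟 d γ x ≤ δ ^ (-|γ|) * weight 𝒟 d γ r * exp (-(𝒟 * d * r ^ (-d - 1) * (r - x))) := by
  have hx0 : 0 < x := (mul_pos hδ hr).trans_le hx.1
  have hpow : x ^ γ ≤ δ ^ (-|γ|) * r ^ γ := by
    rw [← div_le_iff₀ (rpow_pos_of_pos hr γ), ← div_rpow hx0.le hr.le]
    exact rpow_le_rpow_neg_abs γ hδ ((le_div_iff₀ hr).2 hx.1) ((div_le_one hr).2 hx.2)
  have hexp : exp (-𝒟 * x ^ (-d)) ≤
      exp (-𝒟 * r ^ (-d)) * exp (-(𝒟 * d * r ^ (-d - 1) * (r - x))) := by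
    rw [← exp_add]
    gcongr
    nlinarith [le_rpow_neg_sub_rpow_neg hd hx0 hx.2]
  calc weight 𝒟 d γ x ≤ (δ ^ (-|γ|) * r ^ γ) *
        (exp (-𝒟 * r ^ (-d)) * exp (-(𝒟 * d * r ^ (-d - 1) * (r - x)))) :=
        mul_le_mul hpow hexp (exp_nonneg _) (by positivity)
    _ = _ := by rw [weight]; ring

lemma le_weight_of_mem_Icc (h𝒟 : 0 ≤ 𝒟) (hd : 0 ≤ d) (hδ : 0 < δ) (hr : 0 < r)
    (hx : x ∈ Icc (δ * r) r) :
    δ ^ |γ| * weight 𝒟 d γ r * exp (-(𝒟 * d * (δ * r) ^ (-d - 1) * (r - x))) ≤ weight 𝒟 d γ x := by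
  have hδr : 0 < δ * r := mul_pos hδ hr
  have hx0 : 0 < x := hδr.trans_le hx.1
  have hpow : δ ^ |γ| * r ^ γ ≤ x ^ γ := by
    rw [← le_div_iff₀ (rpow_pos_of_pos hr γ), ← div_rpow hx0.le hr.le]
    exact rpow_abs_le_rpow γ hδ ((le_div_iff₀ hr).2 hx.1) ((div_le_one hr).2 hx.2)
  have hexp : exp (-𝒟 * r ^ (-d)) * exp (-(𝒟 * d * (δ * r) ^ (-d - 1) * (r - x))) ≤
      exp (-𝒟 * x ^ (-d)) := by
    rw [← exp_add]
    gcongr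
    nlinarith [rpow_neg_sub_rpow_neg_le hd hδr hx.1 hx.2]
  calc δ ^ |γ| * weight 𝒟 d γ r * exp (-(𝒟 * d * (δ * r) ^ (-d - 1) * (r - x)))
      = (δ ^ |γ| * r ^ γ) *
          (exp (-𝒟 * r ^ (-d)) * exp (-(𝒟 * d * (δ * r) ^ (-d - 1) * (r - x)))) := by
        rw [weight]; ring
    _ ≤ weight 𝒟 d γ x := mul_le_mul hpow hexp (by positivity) (rpow_nonneg hx0.le _)

lemma intervalIntegrable_weight_div_sqrt_sub (h𝒟 : 0 ≤ 𝒟) (hd : 0 ≤ d) (hr : 0 < r)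
    (hsmall : |γ| ≤ 𝒟 * d * r ^ (-d)) :
    IntervalIntegrable (fun x => weight 𝒟 d γ x / √(r - x)) volume 0 r := by
  refine intervalIntegrable_div_sqrt_sub (C := weight 𝒟 d γ r) measurable_weight hr.le
    fun x hx => ?_
  rw [norm_of_nonneg (weight_nonneg hx.1.le)]
  exact weight_monotoneOn h𝒟 hd hsmall hx ⟨hr, le_rfl⟩ hx.2

lemma abelTransform_weight_le (h𝒟 : 0 < 𝒟) (hd : 0 < d) (hδ : δ ∈ Ioo 0 1) (hr : 0 < r)
    (hsmall : |γ| ≤ 𝒟 * d * r ^ (-d)) :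
    abelTransform (weight 𝒟 d γ) r ≤
      δ ^ (-|γ|) * (weight 𝒟 d γ r * √(π / (𝒟 * d * r ^ (-d - 1)))) +
        δ * r * (weight 𝒟 d γ (δ * r) / √(r - δ * r)) := by
  have hδr : δ * r ∈ Ioo 0 r := ⟨mul_pos hδ.1 hr, mul_lt_of_lt_one_left hr hδ.2⟩
  have hint := intervalIntegrable_weight_div_sqrt_sub h𝒟.le hd.le hr hsmall
  have hmem : δ * r ∈ uIcc 0 r := by
    rw [uIcc_of_le hr.le]
    exact Ioo_subset_Icc_self hδr
  have hhead := integral_div_sqrt_sub_le_of_monotoneOn hδr.1.le hδr.2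
    (hint.mono_set (uIcc_subset_uIcc left_mem_uIcc hmem))
    ((weight_monotoneOn h𝒟.le hd.le hsmall).mono (Ioc_subset_Ioc_right hδr.2.le))
    fun x hx => weight_nonneg hx.1.le
  have hbody := integral_div_sqrt_sub_le (C := δ ^ (-|γ|) * weight 𝒟 d γ r)
    (l := 𝒟 * d * r ^ (-d - 1)) (by positivity)
    (mul_nonneg (rpow_pos_of_pos hδ.1 _).le (weight_nonneg hr.le)) hδr.2.le
    (hint.mono_set (uIcc_subset_uIcc hmem right_mem_uIcc))
    fun x hx => weight_le_of_mem_Icc h𝒟.le hd.le hδ.1 hr hx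
  rw [abelTransform, ← intervalIntegral.integral_add_adjacent_intervals
    (hint.mono_set (uIcc_subset_uIcc left_mem_uIcc hmem))
    (hint.mono_set (uIcc_subset_uIcc hmem right_mem_uIcc))]
  linarith

lemma le_abelTransform_weight (h𝒟 : 0 < 𝒟) (hd : 0 < d) (hδ : δ ∈ Ioo 0 1) (hr : 0 < r)
    (hsmall : |γ| ≤ 𝒟 * d * r ^ (-d)) :
    δ ^ |γ| * weight 𝒟 d γ r * √(π / (𝒟 * d * (δ * r) ^ (-d - 1))) *
        (1 - √2 * exp (-(𝒟 * d * (δ * r) ^ (-d - 1) * (r - δ * r)) / 2)) ≤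
      abelTransform (weight 𝒟 d γ) r := by
  have hδr : δ * r ∈ Ioo 0 r := ⟨mul_pos hδ.1 hr, mul_lt_of_lt_one_left hr hδ.2⟩
  have hint := intervalIntegrable_weight_div_sqrt_sub h𝒟.le hd.le hr hsmall
  have hmem : δ * r ∈ uIcc 0 r := by
    rw [uIcc_of_le hr.le]
    exact Ioo_subset_Icc_self hδr
  have hhead : 0 ≤ ∫ x in 0..δ * r, weight 𝒟 d γ x / √(r - x) :=
    intervalIntegral.integral_nonneg hδr.1.le fun x hx =>
      div_nonneg (weight_nonneg hx.1) (sqrt_nonneg _)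
  have hbody := le_integral_div_sqrt_sub (C := δ ^ |γ| * weight 𝒟 d γ r)
    (l := 𝒟 * d * (δ * r) ^ (-d - 1)) (by have := hδr.1; positivity)
    (mul_nonneg (rpow_pos_of_pos hδ.1 _).le (weight_nonneg hr.le)) hδr.2.le
    (hint.mono_set (uIcc_subset_uIcc hmem right_mem_uIcc))
    fun x hx => le_weight_of_mem_Icc h𝒟.le hd.le hδ.1 hr hx
  rw [abelTransform, ← intervalIntegral.integral_add_adjacent_intervals
    (hint.mono_set (uIcc_subset_uIcc left_mem_uIcc hmem))
    (hint.mono_set (uIcc_subset_uIcc hmem right_mem_uIcc))]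
  linarith

end Weight

/-- `weight r · ∫₀^∞ e^{-l t} / √t dt`, where `l = 𝒟 d r^{-d-1}` is the slope of `𝒟 x^{-d}`
at `r`. -/
noncomputable def laplaceApprox (𝒟 d γ r : ℝ) : ℝ := weight 𝒟 d γ r * √(π / (𝒟 * d * r ^ (-d - 1)))

section Asymptotics

variable {𝒟 d γ δ r : ℝ}

lemma weight_pos (hr : 0 < r) : 0 < weight 𝒟 d γ r := by
  unfold weight
  positivity

lemma laplaceApprox_pos (h𝒟 : 0 < 𝒟) (hd : 0 < d) (hr : 0 < r) : 0 < laplaceApprox 𝒟 d γ r := by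
  unfold laplaceApprox
  have := weight_pos (𝒟 := 𝒟) (d := d) (γ := γ) hr
  have := pi_pos
  positivity

lemma laplaceApprox_eq (h𝒟 : 0 < 𝒟) (hd : 0 < d) (hr : 0 < r) :
    laplaceApprox 𝒟 d γ r = √(π / (𝒟 * d)) * r ^ (γ + (d + 1) / 2) * exp (-𝒟 * r ^ (-d)) := by
  have h : π / (𝒟 * d * r ^ (-d - 1)) = π / (𝒟 * d) * (r ^ ((d + 1) / 2)) ^ 2 := by
    rw [← rpow_natCast, ← rpow_mul hr.le, show -d - 1 = -((d + 1) / 2 * (2 : ℕ)) by push_cast; ring,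
      rpow_neg hr.le]
    field_simp
  rw [laplaceApprox, weight, h, sqrt_mul (by positivity), sqrt_sq (by positivity), rpow_add hr]
  ring

lemma weight_mul_left (hδ : 0 < δ) (hr : 0 < r) :
    weight 𝒟 d γ (δ * r) = δ ^ γ * weight 𝒟 d γ r * exp (-(𝒟 * (δ ^ (-d) - 1)) * r ^ (-d)) := by
  have hexp : exp (-𝒟 * (δ ^ (-d) * r ^ (-d))) =
      exp (-𝒟 * r ^ (-d)) * exp (-(𝒟 * (δ ^ (-d) - 1)) * r ^ (-d)) := by
    rw [← exp_add]
    ring_nf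
  rw [weight, weight, mul_rpow hδ.le hr.le, mul_rpow hδ.le hr.le, hexp]
  ring

lemma sqrt_pi_div_mul_left (hδ : 0 < δ) (hr : 0 < r) :
    √(π / (𝒟 * d * (δ * r) ^ (-d - 1))) = δ ^ ((d + 1) / 2) * √(π / (𝒟 * d * r ^ (-d - 1))) := by
  have h : π / (𝒟 * d * (δ * r) ^ (-d - 1)) =
      (δ ^ ((d + 1) / 2)) ^ 2 * (π / (𝒟 * d * r ^ (-d - 1))) := by
    rw [← rpow_natCast, ← rpow_mul hδ.le, mul_rpow hδ.le hr.le,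
      show -d - 1 = -((d + 1) / 2 * (2 : ℕ)) by push_cast; ring, rpow_neg hδ.le]
    field_simp
  rw [h, sqrt_mul (by positivity), sqrt_sq (by positivity)]

lemma tendsto_rpow_neg_rpow_mul_exp (hd : 0 < d) (s : ℝ) {c : ℝ} (hc : 0 < c) :
    Tendsto (fun r => (r ^ (-d)) ^ s * exp (-c * r ^ (-d))) (𝓝[>] 0) (𝓝 0) :=
  (tendsto_rpow_mul_exp_neg_mul_atTop_nhds_zero s c hc).comp
    (tendsto_rpow_neg_nhdsGT_zero (neg_lt_zero.2 hd))

lemma head_div_laplaceApprox_eq (h𝒟 : 0 < 𝒟) (hd : 0 < d) (hδ : δ ∈ Ioo 0 1) (hr : 0 < r) :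
    δ * r * (weight 𝒟 d γ (δ * r) / √(r - δ * r)) / laplaceApprox 𝒟 d γ r =
      δ ^ (γ + 1) * √(𝒟 * d / ((1 - δ) * π)) *
        ((r ^ (-d)) ^ (1 / 2 : ℝ) * exp (-(𝒟 * (δ ^ (-d) - 1)) * r ^ (-d))) := by
  have hrδ : 0 < r - δ * r := by nlinarith [hδ.2]
  have hsqrt : r / (√(r - δ * r) * √(π / (𝒟 * d * r ^ (-d - 1)))) =
      √(𝒟 * d / ((1 - δ) * π)) * (r ^ (-d)) ^ (1 / 2 : ℝ) := by
    have := pi_pos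
    have h1δ : 0 < 1 - δ := sub_pos.2 hδ.2
    have hprod : 𝒟 * d / ((1 - δ) * π) * r ^ (-d) * ((r - δ * r) * (π / (𝒟 * d * r ^ (-d - 1)))) =
        r ^ 2 := by
      rw [rpow_sub_one hr.ne']
      field_simp
    rw [← sqrt_eq_rpow, ← sqrt_mul hrδ.le, ← sqrt_mul (by positivity),
      div_eq_iff (sqrt_pos.2 (by positivity)).ne', ← sqrt_mul (by positivity), hprod, sqrt_sq hr.le]
  have hw := weight_pos (𝒟 := 𝒟) (d := d) (γ := γ) hr
  have hs1 : 0 < √(r - δ * r) := sqrt_pos.2 hrδ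
  have hs2 : 0 < √(π / (𝒟 * d * r ^ (-d - 1))) := sqrt_pos.2 (by have := pi_pos; positivity)
  calc δ * r * (weight 𝒟 d γ (δ * r) / √(r - δ * r)) / laplaceApprox 𝒟 d γ r
      = δ ^ (γ + 1) * exp (-(𝒟 * (δ ^ (-d) - 1)) * r ^ (-d)) *
          (r / (√(r - δ * r) * √(π / (𝒟 * d * r ^ (-d - 1))))) := by
        rw [laplaceApprox, weight_mul_left hδ.1 hr, rpow_add_one hδ.1.ne']
        field_simp
    _ = _ := by
        rw [hsqrt]
        ring

lemma eventually_abs_le_mul_rpow_neg (h𝒟 : 0 < 𝒟) (hd : 0 < d) :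
    ∀ᶠ r in 𝓝[>] 0, |γ| ≤ 𝒟 * d * r ^ (-d) :=
  ((tendsto_rpow_neg_nhdsGT_zero (neg_lt_zero.2 hd)).const_mul_atTop
    (mul_pos h𝒟 hd)).eventually_ge_atTop _

lemma eventually_abelTransform_div_laplaceApprox_lt (h𝒟 : 0 < 𝒟) (hd : 0 < d) (hδ : δ ∈ Ioo 0 1)
    {b : ℝ} (hb : δ ^ (-|γ|) < b) :
    ∀ᶠ r in 𝓝[>] 0, abelTransform (weight 𝒟 d γ) r / laplaceApprox 𝒟 d γ r < b := by
  have hhead : Tendsto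
      (fun r => δ * r * (weight 𝒟 d γ (δ * r) / √(r - δ * r)) / laplaceApprox 𝒟 d γ r)
      (𝓝[>] 0) (𝓝 0) := by
    have hc : 0 < 𝒟 * (δ ^ (-d) - 1) :=
      mul_pos h𝒟 (sub_pos.2 (one_lt_rpow_of_pos_of_lt_one_of_neg hδ.1 hδ.2 (neg_lt_zero.2 hd)))
    have h := (tendsto_rpow_neg_rpow_mul_exp hd (1 / 2) hc).const_mul
      (δ ^ (γ + 1) * √(𝒟 * d / ((1 - δ) * π)))
    rw [mul_zero] at h
    refine h.congr' ?_
    filter_upwards [self_mem_nhdsWithin] with r hr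
    exact (head_div_laplaceApprox_eq h𝒟 hd hδ hr).symm
  filter_upwards [self_mem_nhdsWithin, eventually_abs_le_mul_rpow_neg (γ := γ) h𝒟 hd,
    hhead.eventually (gt_mem_nhds (sub_pos.2 hb))] with r hr hsmall hhead_lt
  have hL := laplaceApprox_pos (γ := γ) h𝒟 hd hr
  rw [div_lt_iff₀ hL] at hhead_lt ⊢
  have := abelTransform_weight_le h𝒟 hd hδ hr hsmall
  rw [← laplaceApprox] at this
  linarith

lemma eventually_lt_abelTransform_div_laplaceApprox (h𝒟 : 0 < 𝒟) (hd : 0 < d) (hδ : δ ∈ Ioo 0 1)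
    {a : ℝ} (ha : a < δ ^ (|γ| + (d + 1) / 2)) :
    ∀ᶠ r in 𝓝[>] 0, a < abelTransform (weight 𝒟 d γ) r / laplaceApprox 𝒟 d γ r := by
  have herr : Tendsto (fun r => exp (-(𝒟 * d * (δ * r) ^ (-d - 1) * (r - δ * r)) / 2))
      (𝓝[>] 0) (𝓝 0) := by
    have hc : 0 < 𝒟 * d * δ ^ (-d - 1) * (1 - δ) / 2 := by
      have := sub_pos.2 hδ.2
      have := rpow_pos_of_pos hδ.1 (-d - 1)
      positivity
    refine (tendsto_rpow_neg_rpow_mul_exp hd 0 hc).congr' ?_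
    filter_upwards [self_mem_nhdsWithin] with r (hr : 0 < r)
    rw [rpow_zero, one_mul, mul_rpow hδ.1.le hr.le, rpow_sub_one hr.ne']
    congr 1
    field_simp
  have hlim : Tendsto (fun r => δ ^ (|γ| + (d + 1) / 2) *
      (1 - √2 * exp (-(𝒟 * d * (δ * r) ^ (-d - 1) * (r - δ * r)) / 2))) (𝓝[>] 0)
      (𝓝 (δ ^ (|γ| + (d + 1) / 2))) := by
    simpa using ((herr.const_mul √2).const_sub 1).const_mul (δ ^ (|γ| + (d + 1) / 2))
  filter_upwards [self_mem_nhdsWithin, eventually_abs_le_mul_rpow_neg (γ := γ) h𝒟 hd,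
    hlim.eventually (lt_mem_nhds ha)] with r hr hsmall hlt
  have hL := laplaceApprox_pos (γ := γ) h𝒟 hd hr
  have hbody := le_abelTransform_weight h𝒟 hd hδ hr hsmall
  rw [sqrt_pi_div_mul_left hδ.1 hr] at hbody
  rw [lt_div_iff₀ hL]
  calc a * laplaceApprox 𝒟 d γ r
      < δ ^ (|γ| + (d + 1) / 2) *
          (1 - √2 * exp (-(𝒟 * d * (δ * r) ^ (-d - 1) * (r - δ * r)) / 2)) *
          laplaceApprox 𝒟 d γ r := mul_lt_mul_of_pos_right hlt hL
    _ = _ := by rw [rpow_add hδ.1, laplaceApprox]; ring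
    _ ≤ _ := hbody

lemma exists_mem_Ioo_rpow_mem (p : ℝ) {U : Set ℝ} (hU : U ∈ 𝓝 1) : ∃ δ ∈ Ioo 0 1, δ ^ p ∈ U := by
  have h : Tendsto (fun δ : ℝ => δ ^ p) (𝓝[<] 1) (𝓝 1) := by
    simpa using (continuousAt_rpow_const 1 p (Or.inl one_ne_zero)).tendsto.mono_left
      nhdsWithin_le_nhds
  exact ((h.eventually hU).and (Ioo_mem_nhdsLT zero_lt_one)).exists.imp fun δ hδ => ⟨hδ.2, hδ.1⟩

end Asymptotics

end AbelAsymptotics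

open AbelAsymptotics Topology

/-- As `r → 0⁺`,
`∫₀^r x^γ exp(-𝒟 x^{-d}) (r-x)^{-1/2} dx ∼ √(π/(𝒟d)) r^{γ+(d+1)/2} exp(-𝒟 r^{-d})`. -/
theorem abel_integral_asymptotics
    (𝒟 d γ : ℝ) (h𝒟 : 0 < 𝒟) (hd : 0 < d) :
    Tendsto
      (fun r : ℝ =>
        (∫ x in (0:ℝ)..r, x ^ γ * Real.exp (-𝒟 * x ^ (-d)) / Real.sqrt (r - x)) /
          (Real.sqrt (Real.pi / (𝒟 * d)) * r ^ (γ + (d + 1) / 2) *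
            Real.exp (-𝒟 * r ^ (-d))))
      (nhdsWithin 0 (Set.Ioi 0)) (nhds 1) := by
  have hmodel : ∀ᶠ r in 𝓝[>] 0, abelTransform (weight 𝒟 d γ) r / laplaceApprox 𝒟 d γ r =
      (∫ x in (0:ℝ)..r, x ^ γ * Real.exp (-𝒟 * x ^ (-d)) / Real.sqrt (r - x)) /
        (Real.sqrt (Real.pi / (𝒟 * d)) * r ^ (γ + (d + 1) / 2) * Real.exp (-𝒟 * r ^ (-d))) := by
    filter_upwards [self_mem_nhdsWithin] with r hr
    rw [laplaceApprox_eq h𝒟 hd hr]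
    rfl
  refine (tendsto_order.2 ⟨fun a ha => ?_, fun b hb => ?_⟩).congr' hmodel
  · obtain ⟨δ, hδ, hδa⟩ := exists_mem_Ioo_rpow_mem (|γ| + (d + 1) / 2) (Ioi_mem_nhds ha)
    exact eventually_lt_abelTransform_div_laplaceApprox h𝒟 hd hδ hδa
  · obtain ⟨δ, hδ, hδb⟩ := exists_mem_Ioo_rpow_mem (-|γ|) (Iio_mem_nhds hb)
    exact eventually_abelTransform_div_laplaceApprox_lt h𝒟 hd hδ hδb
end
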